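/- arXiv:2406.01580 — 8 statements merged into one kernel-verified Lean document; each statement's English description precedes it below -/
import Mathlib

section
/- Let $G$ be a non-trivial ICC group. For every finite subset $A$ of $G$ there exists an $A$-switcher, i.e. an element $b \in G$ such that $A \cap AbA = \varnothing$ and such that for all $a_1', a_2', a_1'', a_2'' \in A$, the equality $a_1' b a_2' = a_1'' b a_2''$ implies $a_1' = a_1''$ and $a_2' = a_2''$. -/
open scoped Pointwise

/-- `b` is an `A`-switcher: `A ∩ AbA = ∅`, and `a₁' b a₂' = a₁'' b a₂''` with all four
elements in `A` implies `a₁' = a₁''` and `a₂' = a₂''`. -/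
def IsSwitcher {G : Type*} [Group G] (A : Set G) (b : G) : Prop :=
  (∀ a₁ ∈ A, ∀ a₂ ∈ A, a₁ * b * a₂ ∉ A) ∧
  ∀ a₁' ∈ A, ∀ a₂' ∈ A, ∀ a₁'' ∈ A, ∀ a₂'' ∈ A,
    a₁' * b * a₂' = a₁'' * b * a₂'' → a₁' = a₁'' ∧ a₂' = a₂''

/-! If `b` is not an `A`-switcher, then either `b` lies in the finite set `A⁻¹AA⁻¹`, or
`b⁻¹gb = h` for some `g ≠ 1` in `A⁻¹A` and `h` in `AA⁻¹`. The solutions `b` of the latter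
equation lie in a left coset of the centralizer of `h`, which has infinite index since `G` is ICC.
As `G` is infinite, the finitely many bad points are also cosets of a subgroup of infinite index,
namely `⊥`, so by B. H. Neumann's lemma all these cosets together cannot cover `G`. -/

open Subgroup

section

variable {G : Type*} [Group G]

lemma Subgroup.index_centralizer_singleton_eq_zero {h : G}
    (hinf : {x : G | IsConj h x}.Infinite) : (centralizer {h}).index = 0 := by
  erw [centralizer_eq_comap_stabilizer,
    index_comap_of_surjective _ (MulEquiv.surjective _),
    MulAction.index_stabilizer]
  refine Set.Infinite.ncard ?_
  convert hinf using 1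
  ext x
  exact ConjAct.mem_orbit_conjAct.trans isConj_comm

lemma exists_conjugators_subset_leftCoset_centralizer (g h : G) :
    ∃ b₀ : G, {b : G | b⁻¹ * g * b = h} ⊆ b₀ • (centralizer {h} : Set G) := by
  by_cases hconj : ∃ b₀ : G, b₀⁻¹ * g * b₀ = h
  · obtain ⟨b₀, rfl⟩ := hconj
    refine ⟨b₀, fun b (hb : b⁻¹ * g * b = _) => ?_⟩
    rw [mem_leftCoset_iff, SetLike.mem_coe, mem_centralizer_singleton_iff]
    calc b₀⁻¹ * b * (b₀⁻¹ * g * b₀) = b₀⁻¹ * g * b := by rw [← hb]; group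
      _ = _ := by group
  · push Not at hconj
    exact ⟨1, fun b hb => absurd hb (hconj b)⟩

lemma exists_forall_notMem_of_subset_leftCoset {ι : Type*} [Finite ι] (X : ι → Set G)
    (hX : ∀ i, ∃ (g : G) (H : Subgroup G), H.index = 0 ∧ X i ⊆ g • (H : Set G)) :
    ∃ b : G, ∀ i, b ∉ X i := by
  classical
  have := Fintype.ofFinite ι
  choose g H hH hXH using hX
  by_contra! hcover
  have hcosets : ⋃ i ∈ Finset.univ, g i • (H i : Set G) = Set.univ :=
    Set.eq_univ_of_forall fun b =>
      let ⟨i, hi⟩ := hcover b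
      Set.mem_biUnion (Finset.mem_univ i) (hXH i hi)
  obtain ⟨i, -, hfi⟩ := exists_finiteIndex_of_leftCoset_cover hcosets
  exact hfi.index_ne_zero (hH i)

lemma exists_notMem_forall_notMem_of_subset_leftCoset [Infinite G] {ι : Type*} [Finite ι]
    {F : Set G} (hF : F.Finite) (X : ι → Set G)
    (hX : ∀ i, ∃ (g : G) (H : Subgroup G), H.index = 0 ∧ X i ⊆ g • (H : Set G)) :
    ∃ b ∉ F, ∀ i, b ∉ X i := by
  have := hF.to_subtype
  have hbot : (⊥ : Subgroup G).index = 0 := by rw [index_bot, Nat.card_eq_zero_of_infinite]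
  obtain ⟨b, hb⟩ := exists_forall_notMem_of_subset_leftCoset (Sum.elim (fun x : F => {x.1}) X)
    (Sum.rec (fun x => ⟨x, ⊥, hbot, by simp⟩) hX)
  exact ⟨b, fun hbF => hb (.inl ⟨b, hbF⟩) rfl, fun i => hb (.inr i)⟩

lemma mem_or_exists_conj_of_not_isSwitcher {A : Set G} {b : G} (hb : ¬ IsSwitcher A b) :
    b ∈ A⁻¹ * A * A⁻¹ ∨
      ∃ g ∈ (A⁻¹ * A) \ {1}, ∃ h ∈ (A * A⁻¹) \ {1}, b⁻¹ * g * b = h := by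
  rcases not_and_or.mp hb with hmem | hinj
  · push Not at hmem
    obtain ⟨a₁, ha₁, a₂, ha₂, hm⟩ := hmem
    left
    exact ⟨a₁⁻¹ * (a₁ * b * a₂), ⟨a₁⁻¹, Set.inv_mem_inv.mpr ha₁, _, hm, rfl⟩,
      a₂⁻¹, Set.inv_mem_inv.mpr ha₂, by group⟩
  · push Not at hinj
    obtain ⟨a₁', ha₁', a₂', ha₂', a₁'', ha₁'', a₂'', ha₂'', heq, hne⟩ := hinj
    have hconj : b⁻¹ * (a₁''⁻¹ * a₁') * b = a₂'' * a₂'⁻¹ :=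
      calc b⁻¹ * (a₁''⁻¹ * a₁') * b = b⁻¹ * a₁''⁻¹ * (a₁' * b * a₂') * a₂'⁻¹ := by group
        _ = a₂'' * a₂'⁻¹ := by rw [heq]; group
    have hg : a₁''⁻¹ * a₁' ≠ 1 := by
      intro hg
      obtain rfl := inv_mul_eq_one.mp hg
      exact hne rfl (mul_left_cancel heq)
    have hh : a₂'' * a₂'⁻¹ ≠ 1 := by
      simpa only [hconj, inv_inv] using (conj_eq_one_iff (a := b⁻¹)).not.mpr hg
    right
    exact ⟨_, ⟨⟨a₁''⁻¹, Set.inv_mem_inv.mpr ha₁'', a₁', ha₁', rfl⟩, hg⟩,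
      _, ⟨⟨a₂'', ha₂'', a₂'⁻¹, Set.inv_mem_inv.mpr ha₂', rfl⟩, hh⟩, hconj⟩

end

/-- In a non-trivial ICC group, every finite subset admits a switcher. -/
theorem exists_switcher {G : Type*} [Group G] [Nontrivial G]
    (hICC : ∀ g : G, g ≠ 1 → {x : G | IsConj g x}.Infinite)
    (A : Set G) (hA : A.Finite) :
    ∃ b : G, IsSwitcher A b := by
  obtain ⟨g₀, hg₀⟩ := exists_ne (1 : G)
  have : Infinite G := Set.infinite_univ_iff.mp ((hICC g₀ hg₀).mono (Set.subset_univ _))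
  set P := ((A⁻¹ * A) \ {1}) ×ˢ ((A * A⁻¹) \ {1})
  have : Finite P := ((hA.inv.mul hA).sdiff.prod (hA.mul hA.inv).sdiff).to_subtype
  obtain ⟨b, hbF, hbP⟩ := exists_notMem_forall_notMem_of_subset_leftCoset
    ((hA.inv.mul hA).mul hA.inv) (fun p : P => {b : G | b⁻¹ * p.1.1 * b = p.1.2})
    fun p =>
      let ⟨b₀, hb₀⟩ := exists_conjugators_subset_leftCoset_centralizer p.1.1 p.1.2
      ⟨b₀, _, index_centralizer_singleton_eq_zero (hICC _ p.2.2.2), hb₀⟩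
  refine ⟨b, by_contra fun hb => ?_⟩
  rcases mem_or_exists_conj_of_not_isSwitcher hb with hbA | ⟨g, hg, h, hh, hconj⟩
  · exact hbF hbA
  · exact hbP ⟨(g, h), hg, hh⟩ hconj
end

section
/- Let $G$ be a non-trivial ICC group. For every finite subset $A$ of $G$ there exists an $A$-superswitcher, i.e. an element $b \in G$ such that $A \cap AbA = \varnothing$, $A \cap Ab^{-1}A = \varnothing$, and for all $a', a'', \bar a', \bar a'' \in A$ and all $\sigma, \bar\sigma \in \{1, -1\}$, the equality $a' b^{\sigma} a'' = \bar a' b^{\bar\sigma} \bar a''$ implies $a' = \bar a'$, $a'' = \bar a''$ and $b^{\sigma} = b^{\bar\sigma}$. -/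
open scoped Pointwise

/-- `b` is an `A`-superswitcher: `A ∩ AbA = ∅`, `A ∩ Ab⁻¹A = ∅`, and
`a' b^σ a'' = ā' b^σ̄ ā''` with the four elements in `A` and `σ, σ̄ ∈ {1, -1}` implies
`a' = ā'`, `a'' = ā''` and `b^σ = b^σ̄`. -/
def IsSuperswitcher {G : Type*} [Group G] (A : Set G) (b : G) : Prop :=
  (∀ a₁ ∈ A, ∀ a₂ ∈ A, a₁ * b * a₂ ∉ A) ∧
  (∀ a₁ ∈ A, ∀ a₂ ∈ A, a₁ * b⁻¹ * a₂ ∉ A) ∧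
  ∀ a' ∈ A, ∀ a'' ∈ A, ∀ c' ∈ A, ∀ c'' ∈ A,
    ∀ σ ∈ ({1, -1} : Set ℤ), ∀ τ ∈ ({1, -1} : Set ℤ),
      a' * b ^ σ * a'' = c' * b ^ τ * c'' → a' = c' ∧ a'' = c'' ∧ b ^ σ = b ^ τ

/-- If the centralizer of `z` has finite index, the conjugacy class of `z` is finite. -/
private lemma conjClass_finite {G : Type*} [Group G] {z : G}
    (h : (Subgroup.centralizer ({z} : Set G)).FiniteIndex) :
    {x : G | IsConj z x}.Finite := by
  haveI := h
  haveI : Finite (G ⧸ Subgroup.centralizer ({z} : Set G)) := inferInstance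
  let f : G ⧸ Subgroup.centralizer ({z} : Set G) → G :=
    Quotient.lift (fun c : G => c * z * c⁻¹) (by
      intro a b hab
      have h' : a⁻¹ * b ∈ Subgroup.centralizer ({z} : Set G) :=
        (QuotientGroup.leftRel_apply).mp hab
      rw [Subgroup.mem_centralizer_singleton_iff] at h'
      calc a * z * a⁻¹ = a * (z * (a⁻¹ * b)) * b⁻¹ := by group
        _ = a * ((a⁻¹ * b) * z) * b⁻¹ := by rw [h']
        _ = b * z * b⁻¹ := by group)
  apply (Set.finite_range f).subset
  intro x hx
  obtain ⟨c, hc⟩ := isConj_iff.mp hx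
  exact ⟨QuotientGroup.mk c, hc⟩

/-- A set is small if it is contained in a left coset of the centralizer of a
nontrivial element. -/
private def SmallSet {G : Type*} [Group G] (S : Set G) : Prop :=
  ∃ g z : G, z ≠ 1 ∧ S ⊆ g • (Subgroup.centralizer ({z} : Set G) : Set G)

private lemma smallSet_subset {G : Type*} [Group G] {S T : Set G}
    (h : SmallSet T) (hs : S ⊆ T) : SmallSet S := by
  obtain ⟨g, z, hz, hsub⟩ := h
  exact ⟨g, z, hz, hs.trans hsub⟩

private lemma smallSet_singleton {G : Type*} [Group G] {z₀ : G} (hz₀ : z₀ ≠ 1) (c : G) :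
    SmallSet ({c} : Set G) := by
  refine ⟨c, z₀, hz₀, ?_⟩
  rintro b rfl
  rw [mem_leftCoset_iff]
  simp only [inv_mul_cancel, SetLike.mem_coe]
  exact Subgroup.one_mem _

private lemma smallSet_conj {G : Type*} [Group G] {p : G} (q : G) (hp : p ≠ 1) :
    SmallSet {b : G | b⁻¹ * p * b = q} := by
  rcases Set.eq_empty_or_nonempty {b : G | b⁻¹ * p * b = q} with he | ⟨b₀, hb₀⟩
  · exact ⟨1, p, hp, by rw [he]; exact Set.empty_subset _⟩
  · simp only [Set.mem_setOf_eq] at hb₀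
    have hq : q ≠ 1 := by
      intro h
      apply hp
      calc p = b₀ * (b₀⁻¹ * p * b₀) * b₀⁻¹ := by group
        _ = b₀ * 1 * b₀⁻¹ := by rw [hb₀, h]
        _ = 1 := by group
    refine ⟨b₀, q, hq, ?_⟩
    intro b hb
    simp only [Set.mem_setOf_eq] at hb
    rw [mem_leftCoset_iff, SetLike.mem_coe, Subgroup.mem_centralizer_singleton_iff]
    have e1 : p = b * q * b⁻¹ := by rw [← hb]; group
    have e2 : p = b₀ * q * b₀⁻¹ := by rw [← hb₀]; group
    have e3 : b * q * b⁻¹ = b₀ * q * b₀⁻¹ := by rw [← e1, ← e2]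
    calc (b₀⁻¹ * b) * q = b₀⁻¹ * (b * q * b⁻¹) * b := by group
      _ = b₀⁻¹ * (b₀ * q * b₀⁻¹) * b := by rw [e3]
      _ = q * (b₀⁻¹ * b) := by group

private lemma smallSet_quad {G : Type*} [Group G] {c d : G} (hcd : c * d ≠ 1) :
    SmallSet {b : G | b * c * b = d} := by
  refine ⟨c⁻¹, c * d, hcd, ?_⟩
  intro b hb
  simp only [Set.mem_setOf_eq] at hb
  rw [mem_leftCoset_iff, SetLike.mem_coe, Subgroup.mem_centralizer_singleton_iff]
  have k : c * b * (c * b) = c * d := by rw [← hb]; group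
  have h0 : c⁻¹⁻¹ * b = c * b := by group
  rw [h0]
  calc (c * b) * (c * d) = (c * b) * (c * b * (c * b)) := by rw [k]
    _ = (c * b * (c * b)) * (c * b) := by group
    _ = (c * d) * (c * b) := by rw [k]

private lemma smallSet_translate {G : Type*} [Group G] {S : Set G} (x : G)
    (h : SmallSet S) : SmallSet {b : G | b * x ∈ S} := by
  obtain ⟨g, z, hz, hsub⟩ := h
  have hz' : x * z * x⁻¹ ≠ 1 := by
    intro h1
    apply hz
    calc z = x⁻¹ * (x * z * x⁻¹) * x := by group
      _ = x⁻¹ * 1 * x := by rw [h1]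
      _ = 1 := by group
  refine ⟨g * x⁻¹, x * z * x⁻¹, hz', ?_⟩
  intro b hb
  simp only [Set.mem_setOf_eq] at hb
  have hm := hsub hb
  rw [mem_leftCoset_iff, SetLike.mem_coe, Subgroup.mem_centralizer_singleton_iff] at hm
  rw [mem_leftCoset_iff, SetLike.mem_coe, Subgroup.mem_centralizer_singleton_iff]
  calc ((g * x⁻¹)⁻¹ * b) * (x * z * x⁻¹)
      = x * ((g⁻¹ * (b * x)) * z) * x⁻¹ := by group
    _ = x * (z * (g⁻¹ * (b * x))) * x⁻¹ := by rw [hm]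
    _ = (x * z * x⁻¹) * ((g * x⁻¹)⁻¹ * b) := by group

private lemma exists_avoid {G : Type*} [Group G]
    (hICC : ∀ g : G, g ≠ 1 → {x : G | IsConj g x}.Infinite)
    {ι : Type*} (s : Finset ι) (S : ι → Set G)
    (hS : ∀ i ∈ s, SmallSet (S i)) : ∃ b : G, ∀ i ∈ s, b ∉ S i := by
  by_contra hc
  push_neg at hc
  choose g z hz hsub using fun i : {i // i ∈ s} => hS i i.2
  have hcovers : ⋃ i ∈ (Finset.univ : Finset {i // i ∈ s}),
      (g i) • ((Subgroup.centralizer ({z i} : Set G) : Subgroup G) : Set G) = Set.univ := by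
    apply Set.eq_univ_of_forall
    intro b
    obtain ⟨i, hi, hbi⟩ := hc b
    exact Set.mem_biUnion (Finset.mem_univ (⟨i, hi⟩ : {i // i ∈ s}))
      (hsub ⟨i, hi⟩ hbi)
  obtain ⟨k, -, hk⟩ := Subgroup.exists_finiteIndex_of_leftCoset_cover hcovers
  exact (hICC (z k) (hz k)) (conjClass_finite hk)

private lemma reduce {G : Type*} [Group G] (A : Set G) (b : G)
    (h1 : ∀ a₁ ∈ A, ∀ a₂ ∈ A, ∀ c ∈ A,
      b ≠ a₁⁻¹ * c * a₂⁻¹ ∧ b ≠ (a₁⁻¹ * c * a₂⁻¹)⁻¹)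
    (h2 : ∀ c ∈ (A ∪ A⁻¹) * (A ∪ A⁻¹), ∀ d ∈ (A ∪ A⁻¹) * (A ∪ A⁻¹),
      c ≠ 1 → b⁻¹ * c * b ≠ d)
    (h3 : ∀ c ∈ (A ∪ A⁻¹) * (A ∪ A⁻¹), ∀ d ∈ (A ∪ A⁻¹) * (A ∪ A⁻¹),
      b * c * b ≠ d) :
    IsSuperswitcher A b := by
  have memP₁ : ∀ u ∈ A, ∀ v ∈ A, u⁻¹ * v ∈ (A ∪ A⁻¹) * (A ∪ A⁻¹) := fun u hu v hv =>
    Set.mul_mem_mul (Or.inr (Set.inv_mem_inv.mpr hu)) (Or.inl hv)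
  have memP₂ : ∀ u ∈ A, ∀ v ∈ A, u * v⁻¹ ∈ (A ∪ A⁻¹) * (A ∪ A⁻¹) := fun u hu v hv =>
    Set.mul_mem_mul (Or.inl hu) (Or.inr (Set.inv_mem_inv.mpr hv))
  refine ⟨?_, ?_, ?_⟩
  · intro a₁ ha₁ a₂ ha₂ hmem
    exact (h1 a₁ ha₁ a₂ ha₂ _ hmem).1 (by group)
  · intro a₁ ha₁ a₂ ha₂ hmem
    exact (h1 a₁ ha₁ a₂ ha₂ _ hmem).2 (by group)
  · intro a' ha' a'' ha'' c' hc' c'' hc'' σ hσ τ hτ heq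
    simp only [Set.mem_insert_iff, Set.mem_singleton_iff] at hσ hτ
    rcases hσ with rfl | rfl
    · rcases hτ with rfl | rfl
      · -- σ = 1, τ = 1
        rw [zpow_one] at heq ⊢
        have hac : a' = c' := by
          by_contra hne
          have hp : c'⁻¹ * a' ≠ 1 := fun h => hne (inv_mul_eq_one.mp h).symm
          apply h2 (c'⁻¹ * a') (memP₁ c' hc' a' ha') (c'' * a''⁻¹)
            (memP₂ c'' hc'' a'' ha'') hp
          calc b⁻¹ * (c'⁻¹ * a') * b = b⁻¹ * c'⁻¹ * (a' * b * a'') * a''⁻¹ := by group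
            _ = b⁻¹ * c'⁻¹ * (c' * b * c'') * a''⁻¹ := by rw [heq]
            _ = c'' * a''⁻¹ := by group
        subst hac
        have hcc : a'' = c'' := mul_left_cancel heq
        exact ⟨rfl, hcc, rfl⟩
      · -- σ = 1, τ = -1 : impossible
        rw [zpow_one, zpow_neg_one] at heq ⊢
        exact absurd
          (calc b * (a'' * c''⁻¹) * b = a'⁻¹ * (a' * b * a'') * c''⁻¹ * b := by group
            _ = a'⁻¹ * (c' * b⁻¹ * c'') * c''⁻¹ * b := by rw [heq]
            _ = a'⁻¹ * c' := by group)
          (h3 (a'' * c''⁻¹) (memP₂ a'' ha'' c'' hc'') (a'⁻¹ * c') (memP₁ a' ha' c' hc'))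
    · rcases hτ with rfl | rfl
      · -- σ = -1, τ = 1 : impossible
        rw [zpow_neg_one, zpow_one] at heq ⊢
        exact absurd
          (calc b * (c'' * a''⁻¹) * b = c'⁻¹ * (c' * b * c'') * a''⁻¹ * b := by group
            _ = c'⁻¹ * (a' * b⁻¹ * a'') * a''⁻¹ * b := by rw [← heq]
            _ = c'⁻¹ * a' := by group)
          (h3 (c'' * a''⁻¹) (memP₂ c'' hc'' a'' ha'') (c'⁻¹ * a') (memP₁ c' hc' a' ha'))
      · -- σ = -1, τ = -1
        rw [zpow_neg_one] at heq ⊢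
        have hac : a'' = c'' := by
          by_contra hne
          have hp : c'' * a''⁻¹ ≠ 1 := fun h => hne (mul_inv_eq_one.mp h).symm
          apply h2 (c'' * a''⁻¹) (memP₂ c'' hc'' a'' ha'') (c'⁻¹ * a')
            (memP₁ c' hc' a' ha') hp
          calc b⁻¹ * (c'' * a''⁻¹) * b = c'⁻¹ * (c' * b⁻¹ * c'') * a''⁻¹ * b := by group
            _ = c'⁻¹ * (a' * b⁻¹ * a'') * a''⁻¹ * b := by rw [← heq]
            _ = c'⁻¹ * a' := by group
        subst hac
        have h' : a' * b⁻¹ = c' * b⁻¹ := mul_right_cancel heq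
        exact ⟨mul_right_cancel h', rfl, rfl⟩

private def SfFam {G : Type*} [Group G] (x : G) : ℕ × G × G → Set G
  | (0, c, _) => {c}
  | (1, c, d) => {b : G | c ≠ 1 ∧ b⁻¹ * c * b = d}
  | (2, c, d) => {b : G | c * d ≠ 1 ∧ b * c * b = d}
  | (3, c, _) => {b : G | b * x ∈ ({c} : Set G)}
  | (4, c, d) => {b : G | b * x ∈ {β : G | c ≠ 1 ∧ β⁻¹ * c * β = d}}
  | (5, c, d) => {b : G | b * x ∈ {β : G | c * d ≠ 1 ∧ β * c * β = d}}
  | (_, c, d) => {b : G | b * c * b = c⁻¹ ∧ (b * x) * d * (b * x) = d⁻¹}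

/-- In a non-trivial ICC group, every finite subset admits a superswitcher. -/
theorem exists_superswitcher {G : Type*} [Group G] [Nontrivial G]
    (hICC : ∀ g : G, g ≠ 1 → {x : G | IsConj g x}.Infinite)
    (A : Set G) (hA : A.Finite) :
    ∃ b : G, IsSuperswitcher A b := by
  classical
  obtain ⟨z₀, hz₀⟩ := exists_ne (1 : G)
  have hGinf : Infinite G :=
    Set.infinite_univ_iff.mp ((hICC z₀ hz₀).mono (Set.subset_univ _))
  by_contra hno
  push_neg at hno
  set P : Set G := (A ∪ A⁻¹) * (A ∪ A⁻¹) with hPdef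
  have hPfin : P.Finite := (hA.union hA.inv).mul (hA.union hA.inv)
  set Ff : Set G := {v | ∃ a₁ ∈ A, ∃ a₂ ∈ A, ∃ c ∈ A,
      v = a₁⁻¹ * c * a₂⁻¹ ∨ v = (a₁⁻¹ * c * a₂⁻¹)⁻¹} with hFdef
  have hFfin : Ff.Finite := by
    have hsub : Ff ⊆ (fun y : G × G × G => y.1⁻¹ * y.2.2 * y.2.1⁻¹) '' (A ×ˢ A ×ˢ A)
        ∪ (fun y : G × G × G => (y.1⁻¹ * y.2.2 * y.2.1⁻¹)⁻¹) '' (A ×ˢ A ×ˢ A) := by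
      rintro v ⟨a₁, h₁, a₂, h₂, c, h₃, h | h⟩
      · exact Or.inl ⟨(a₁, a₂, c), ⟨h₁, h₂, h₃⟩, h.symm⟩
      · exact Or.inr ⟨(a₁, a₂, c), ⟨h₁, h₂, h₃⟩, h.symm⟩
    exact (((hA.prod (hA.prod hA)).image _).union
      ((hA.prod (hA.prod hA)).image _)).subset hsub
  set Q : Set G := P ∪ Ff with hQdef
  have hQfin : Q.Finite := hPfin.union hFfin
  have hprodfin : {v : G | ∃ c ∈ Q, ∃ d ∈ Q, v = c * d⁻¹}.Finite := by
    have hsub : {v : G | ∃ c ∈ Q, ∃ d ∈ Q, v = c * d⁻¹}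
        ⊆ (fun y : G × G => y.1 * y.2⁻¹) '' (Q ×ˢ Q) := by
      rintro v ⟨c, hc, d, hd, rfl⟩
      exact ⟨(c, d), ⟨hc, hd⟩, rfl⟩
    exact ((hQfin.prod hQfin).image _).subset hsub
  obtain ⟨x, hx⟩ := hprodfin.infinite_compl.nonempty
  have hxcd : ∀ c ∈ Q, ∀ d ∈ Q, c⁻¹ * x * d ≠ 1 := by
    intro c hc d hd h
    apply hx
    refine ⟨c, hc, d, hd, ?_⟩
    calc x = c * (c⁻¹ * x * d) * d⁻¹ := by group
      _ = c * 1 * d⁻¹ := by rw [h]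
      _ = c * d⁻¹ := by group
  have hsmall1 : ∀ c d : G, SmallSet {b : G | c ≠ 1 ∧ b⁻¹ * c * b = d} := by
    intro c d
    by_cases hc : c = 1
    · exact ⟨1, z₀, hz₀, by rintro b ⟨h, -⟩; exact absurd hc h⟩
    · exact smallSet_subset (smallSet_conj d hc) (fun b hb => hb.2)
  have hsmall2 : ∀ c d : G, SmallSet {b : G | c * d ≠ 1 ∧ b * c * b = d} := by
    intro c d
    by_cases hcd : c * d = 1
    · exact ⟨1, z₀, hz₀, by rintro b ⟨h, -⟩; exact absurd hcd h⟩
    · exact smallSet_subset (smallSet_quad hcd) (fun b hb => hb.2)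
  have hSsmall : ∀ i ∈ (Finset.range 7) ×ˢ hQfin.toFinset ×ˢ hQfin.toFinset,
      SmallSet (SfFam x i) := by
    rintro ⟨k, c, d⟩ hmem
    rw [Finset.mem_product] at hmem
    obtain ⟨hk, hcd⟩ := hmem
    rw [Finset.mem_product] at hcd
    obtain ⟨hcQ, hdQ⟩ := hcd
    rw [Set.Finite.mem_toFinset] at hcQ hdQ
    rw [Finset.mem_range] at hk
    interval_cases k
    · exact smallSet_singleton hz₀ c
    · exact hsmall1 c d
    · exact hsmall2 c d
    · exact smallSet_translate x (smallSet_singleton hz₀ c)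
    · exact smallSet_translate x (hsmall1 c d)
    · exact smallSet_translate x (hsmall2 c d)
    · -- pair set
      have hp : c⁻¹ * x * d ≠ 1 := hxcd c hcQ d hdQ
      refine smallSet_subset (smallSet_conj (c * d⁻¹ * x⁻¹) hp) ?_
      rintro b ⟨hb1, hb2⟩
      simp only [Set.mem_setOf_eq]
      have e1 : b⁻¹ * c⁻¹ = c * b := by rw [← hb1]; group
      have e2 : b * x * d * b = d⁻¹ * x⁻¹ := by
        calc b * x * d * b = (b * x) * d * (b * x) * x⁻¹ := by group
          _ = d⁻¹ * x⁻¹ := by rw [hb2]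
      calc b⁻¹ * (c⁻¹ * x * d) * b = (b⁻¹ * c⁻¹) * (x * d * b) := by group
        _ = (c * b) * (x * d * b) := by rw [e1]
        _ = c * (b * x * d * b) := by group
        _ = c * (d⁻¹ * x⁻¹) := by rw [e2]
        _ = c * d⁻¹ * x⁻¹ := by group
  obtain ⟨b, hb⟩ := exists_avoid hICC
    ((Finset.range 7) ×ˢ hQfin.toFinset ×ˢ hQfin.toFinset) (SfFam x) hSsmall
  have hmem' : ∀ (k : ℕ) (c d : G), k < 7 → c ∈ Q → d ∈ Q →
      (k, c, d) ∈ (Finset.range 7) ×ˢ hQfin.toFinset ×ˢ hQfin.toFinset := by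
    intro k c d hk hc hd
    rw [Finset.mem_product]
    refine ⟨Finset.mem_range.mpr hk, ?_⟩
    rw [Finset.mem_product]
    exact ⟨hQfin.mem_toFinset.mpr hc, hQfin.mem_toFinset.mpr hd⟩
  have hPQ : ∀ w ∈ P, w ∈ Q := fun w hw => Or.inl hw
  have hFQ : ∀ w ∈ Ff, w ∈ Q := fun w hw => Or.inr hw
  have key : ∀ β : G, (∀ v ∈ Ff, β ≠ v) →
      (∀ c ∈ P, ∀ d ∈ P, c ≠ 1 → β⁻¹ * c * β ≠ d) →
      (∀ c ∈ P, ∀ d ∈ P, c * d ≠ 1 → β * c * β ≠ d) →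
      ∃ w ∈ P, β * w * β = w⁻¹ := by
    intro β k1 k2 k3
    by_cases hw : ∃ w ∈ P, β * w * β = w⁻¹
    · exact hw
    · exfalso
      push_neg at hw
      apply hno β
      apply reduce A β
      · intro a₁ ha₁ a₂ ha₂ c hc
        constructor
        · exact k1 _ ⟨a₁, ha₁, a₂, ha₂, c, hc, Or.inl rfl⟩
        · exact k1 _ ⟨a₁, ha₁, a₂, ha₂, c, hc, Or.inr rfl⟩
      · exact fun c hc d hd h => k2 c hc d hd h
      · intro c hc d hd
        by_cases hcd : c * d = 1
        · have hdc : d = c⁻¹ := eq_inv_of_mul_eq_one_right hcd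
          rw [hdc]
          exact hw c hc
        · exact k3 c hc d hd hcd
  have h1b : ∀ v ∈ Ff, b ≠ v := by
    intro v hv hbv
    exact hb (0, v, v) (hmem' 0 v v (by norm_num) (hFQ v hv) (hFQ v hv)) hbv
  have h2b : ∀ c ∈ P, ∀ d ∈ P, c ≠ 1 → b⁻¹ * c * b ≠ d := by
    intro c hc d hd hc1 hcon
    exact hb (1, c, d) (hmem' 1 c d (by norm_num) (hPQ c hc) (hPQ d hd)) ⟨hc1, hcon⟩
  have h3b : ∀ c ∈ P, ∀ d ∈ P, c * d ≠ 1 → b * c * b ≠ d := by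
    intro c hc d hd hcd1 hcon
    exact hb (2, c, d) (hmem' 2 c d (by norm_num) (hPQ c hc) (hPQ d hd)) ⟨hcd1, hcon⟩
  have h1bx : ∀ v ∈ Ff, b * x ≠ v := by
    intro v hv hbv
    exact hb (3, v, v) (hmem' 3 v v (by norm_num) (hFQ v hv) (hFQ v hv)) hbv
  have h2bx : ∀ c ∈ P, ∀ d ∈ P, c ≠ 1 → (b * x)⁻¹ * c * (b * x) ≠ d := by
    intro c hc d hd hc1 hcon
    exact hb (4, c, d) (hmem' 4 c d (by norm_num) (hPQ c hc) (hPQ d hd)) ⟨hc1, hcon⟩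
  have h3bx : ∀ c ∈ P, ∀ d ∈ P, c * d ≠ 1 → (b * x) * c * (b * x) ≠ d := by
    intro c hc d hd hcd1 hcon
    exact hb (5, c, d) (hmem' 5 c d (by norm_num) (hPQ c hc) (hPQ d hd)) ⟨hcd1, hcon⟩
  obtain ⟨w₁, hw₁P, hw₁⟩ := key b h1b h2b h3b
  obtain ⟨w₂, hw₂P, hw₂⟩ := key (b * x) h1bx h2bx h3bx
  exact hb (6, w₁, w₂) (hmem' 6 w₁ w₂ (by norm_num) (hPQ w₁ hw₁P) (hPQ w₂ hw₂P))
    ⟨hw₁, hw₂⟩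
end

section
/- Let $(K_i)_{i \in \mathbb{N}}$ be an i.i.d. sequence of random variables with values in the positive integers, with $\Pr(K_i = k) = k^{-5/4}/c$ for every $k \geq 1$, where $c = \sum_{k \geq 1} k^{-5/4}$. Then for almost every trajectory $(k_i)$ there is a number $i_0$ such that: (1) every record time $i \geq i_0$ is simple, and (2) $\max\{k_1, \ldots, k_i\} > i$ for all $i \geq i_0$. -/
open MeasureTheory ProbabilityTheory Filter

def IsRecordTime (k : ℕ → ℕ) (i : ℕ) : Prop := ∀ j < i, k j < k i

def IsNonStrictRecordTime (k : ℕ → ℕ) (i : ℕ) : Prop := ∀ j < i, k j ≤ k i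

def IsSimpleRecordTime (k : ℕ → ℕ) (i : ℕ) : Prop :=
  IsRecordTime k i ∧ ∀ j > i, IsNonStrictRecordTime k j → k i < k j

/-!
Let `ν` be the common law of the `K i`, a power law `ν {k} ∝ k ^ (-s)` with `1 < s < 2`
(here `s = 5/4`), so that its tail `ν (Ioi m)` is of order `m ^ (1 - s)`.

All of `K 0, …, K i` are `≤ i` with probability `ν (Iic i) ^ (i + 1) ≤ exp (-δ i ^ (2 - s))` for
some `δ > 0`, which is summable. A record `i` that is not simple is followed by a non-strict record
`j > i` tying it, `K i = K j = m`; this has probability at most `j ν {m}² ν (Iic m) ^ (j - 1)`, and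
summing over `j` gives `(ν {m} / ν (Ioi m))²`, which is `O(m⁻²)`. Borel–Cantelli concludes both
parts.
-/

open Set
open scoped ENNReal

def IsTiedRecordTime (k : ℕ → ℕ) (j : ℕ) : Prop :=
  IsNonStrictRecordTime k j ∧ ∃ i < j, k i = k j

open Finset in
theorem ENNReal.tsum_add_one_mul_pow (x : ℝ≥0∞) :
    ∑' n : ℕ, ((n : ℝ≥0∞) + 1) * x ^ n = (1 - x)⁻¹ ^ 2 := by
  have hterm : ∀ n : ℕ, ((n : ℝ≥0∞) + 1) * x ^ n =
      ∑' kl : antidiagonal n, x ^ (kl : ℕ × ℕ).1 * x ^ (kl : ℕ × ℕ).2 := by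
    intro n
    rw [tsum_fintype, sum_coe_sort (antidiagonal n) (fun kl => x ^ kl.1 * x ^ kl.2),
      sum_congr rfl fun kl hkl => by rw [← pow_add, mem_antidiagonal.1 hkl]]
    simp
  rw [← ENNReal.tsum_geometric, sq, ← ENNReal.tsum_mul_right]
  simp_rw [← ENNReal.tsum_mul_left, hterm]
  rw [← ENNReal.tsum_prod, ← HasAntidiagonal.sigmaAntidiagonalEquivProd.tsum_eq]
  exact (ENNReal.tsum_sigma' (β := fun n => antidiagonal n)
    fun c => x ^ c.2.1.1 * x ^ c.2.1.2).symm

theorem Real.summable_exp_neg_mul_rpow {δ p : ℝ} (hδ : 0 < δ) (hp : 0 < p) :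
    Summable fun n : ℕ => exp (-(δ * (n : ℝ) ^ p)) := by
  have hlittle := (isLittleO_exp_neg_mul_rpow_atTop hδ (-2 / p)).comp_tendsto
    ((tendsto_rpow_atTop hp).comp tendsto_natCast_atTop_atTop)
  refine summable_of_isBigO_nat (Real.summable_nat_rpow.2 (by norm_num : (-2 : ℝ) < -1))
    (hlittle.isBigO.congr (fun n => by simp [neg_mul]) fun n => ?_)
  simp only [Function.comp_apply]
  rw [← Real.rpow_mul n.cast_nonneg, mul_div_cancel₀ _ hp.ne']

theorem eventually_isSimpleRecordTime {k : ℕ → ℕ}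
    (h : ∀ᶠ j in atTop, ¬IsTiedRecordTime k j) :
    ∀ᶠ i in atTop, IsRecordTime k i → IsSimpleRecordTime k i := by
  obtain ⟨N, hN⟩ := eventually_atTop.1 h
  refine eventually_atTop.2 ⟨N, fun i hi hrec => ⟨hrec, fun j hij hj => ?_⟩⟩
  exact (hj i hij).lt_of_ne fun heq => hN j (hi.trans hij.le) ⟨hj, i, hij, heq⟩

variable {ν : Measure ℕ}

theorem tsum_measure_Iic_pow_ne_top [IsProbabilityMeasure ν] {δ q : ℝ} (hδ : 0 < δ)
    (hq : q < 1)
    (htail : ∀ m : ℕ, ENNReal.ofReal (δ * (m : ℝ) ^ (-q)) ≤ ν (Ioi m)) :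
    ∑' i, ν (Iic i) ^ (i + 1) ≠ ∞ := by
  have hbound (i : ℕ) :
      ν (Iic i) ^ (i + 1) ≤ ENNReal.ofReal (Real.exp (-(δ * (i : ℝ) ^ (1 - q)))) := by
    have hx : 0 ≤ δ * (i : ℝ) ^ (-q) := by positivity
    calc ν (Iic i) ^ (i + 1) ≤ ν (Iic i) ^ i := pow_le_pow_right_of_le_one' prob_le_one i.le_succ
      _ = (1 - ν (Ioi i)) ^ i := by rw [← prob_compl_eq_one_sub measurableSet_Ioi, compl_Ioi]
      _ ≤ ENNReal.ofReal (1 - δ * (i : ℝ) ^ (-q)) ^ i := by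
          rw [ENNReal.ofReal_sub _ hx, ENNReal.ofReal_one]
          gcongr
          exact htail i
      _ ≤ ENNReal.ofReal (Real.exp (-(δ * (i : ℝ) ^ (-q)))) ^ i := by
          gcongr
          exact Real.one_sub_le_exp_neg _
      _ = ENNReal.ofReal (Real.exp (-(δ * (i : ℝ) ^ (1 - q)))) := by
          rw [← ENNReal.ofReal_pow (Real.exp_pos _).le, ← Real.exp_nat_mul, sub_eq_neg_add,
            Real.rpow_add' i.cast_nonneg (by linarith), Real.rpow_one]
          ring_nf
  exact ne_top_of_le_ne_top (Real.summable_exp_neg_mul_rpow hδ (sub_pos.2 hq)).tsum_ofReal_ne_top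
    (ENNReal.tsum_le_tsum hbound)

/-- No mass at `0` for `s ≠ 0`, since `(0 : ℝ) ^ (-s) = 0`. -/
def IsPowerLaw (ν : Measure ℕ) (s c : ℝ) : Prop :=
  ∀ k : ℕ, ν {k} = ENNReal.ofReal ((k : ℝ) ^ (-s) / c)

namespace IsPowerLaw

variable {s c : ℝ}

theorem pos [NeZero ν] (hν : IsPowerLaw ν s c) : 0 < c := by
  by_contra! hc
  refine NeZero.ne ν (Measure.ext_of_singleton fun k => ?_)
  rw [hν _, Measure.coe_zero, Pi.zero_apply, ENNReal.ofReal_eq_zero]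
  exact div_nonpos_of_nonneg_of_nonpos (by positivity) hc

theorem mul_measure_singleton_le_measure_Ioi (hν : IsPowerLaw ν s c) (hs : 0 < s) (hc : 0 < c)
    (m : ℕ) :
    ν {m} * ENNReal.ofReal (m * 2 ^ (-s)) ≤ ν (Ioi m) := by
  have hdouble : ν {m} * ENNReal.ofReal (m * 2 ^ (-s)) = m * ν {2 * m} := by
    rw [hν _, hν _, ← ENNReal.ofReal_natCast, ← ENNReal.ofReal_mul (by positivity),
      ← ENNReal.ofReal_mul (by positivity), Nat.cast_mul, Nat.cast_ofNat,
      Real.mul_rpow zero_le_two m.cast_nonneg]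
    ring_nf
  have hanti : ∀ k ∈ Finset.Ioc m (2 * m), ν {2 * m} ≤ ν {k} := by
    intro k hk
    obtain ⟨hmk, hk2m⟩ := Finset.mem_Ioc.1 hk
    have hk0 : (0 : ℝ) < k := by exact_mod_cast (Nat.zero_le m).trans_lt hmk
    rw [hν _, hν _]
    exact ENNReal.ofReal_le_ofReal <| div_le_div_of_nonneg_right
      (Real.rpow_le_rpow_of_nonpos hk0 (by exact_mod_cast hk2m) (by linarith)) hc.le
  calc ν {m} * ENNReal.ofReal (m * 2 ^ (-s)) = ∑ _k ∈ Finset.Ioc m (2 * m), ν {2 * m} := by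
        rw [hdouble, Finset.sum_const, Nat.card_Ioc, nsmul_eq_mul]
        congr; omega
    _ ≤ ∑ k ∈ Finset.Ioc m (2 * m), ν {k} := Finset.sum_le_sum hanti
    _ = ν (Finset.Ioc m (2 * m)) := sum_measure_singleton
    _ ≤ ν (Ioi m) := measure_mono fun k hk => (Finset.mem_Ioc.1 hk).1

theorem ofReal_le_measure_Ioi (hν : IsPowerLaw ν s c) (hs : 1 < s) (hc : 0 < c) (m : ℕ) :
    ENNReal.ofReal (2 ^ (-s) / c * (m : ℝ) ^ (-(s - 1))) ≤ ν (Ioi m) := by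
  refine le_of_eq_of_le ?_ (hν.mul_measure_singleton_le_measure_Ioi (by linarith) hc m)
  rw [hν _, ← ENNReal.ofReal_mul (by positivity), neg_sub, sub_eq_neg_add,
    Real.rpow_add' m.cast_nonneg (by linarith), Real.rpow_one]
  ring_nf

theorem measure_singleton_div_measure_Ioi_le (hν : IsPowerLaw ν s c) (hs : 0 < s) (hc : 0 < c)
    (m : ℕ) :
    ν {m} / ν (Ioi m) ≤ ENNReal.ofReal (2 ^ s / m) := by
  rcases m.eq_zero_or_pos with rfl | hm
  · simp [hν 0, Real.zero_rpow (neg_ne_zero.2 hs.ne')]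
  refine ENNReal.div_le_of_le_mul' ?_
  have hone : (m * 2 ^ (-s) : ℝ) * (2 ^ s / m) = 1 := by
    rw [Real.rpow_neg zero_le_two]
    field_simp
  calc ν {m} = ν {m} * ENNReal.ofReal (m * 2 ^ (-s)) * ENNReal.ofReal (2 ^ s / m) := by
        rw [mul_assoc, ← ENNReal.ofReal_mul (by positivity), hone, ENNReal.ofReal_one, mul_one]
    _ ≤ ν (Ioi m) * ENNReal.ofReal (2 ^ s / m) := by
        gcongr
        exact hν.mul_measure_singleton_le_measure_Ioi hs hc m

theorem tsum_measure_singleton_div_measure_Ioi_sq_ne_top (hν : IsPowerLaw ν s c)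
    (hs : 0 < s) (hc : 0 < c) :
    ∑' m, (ν {m} / ν (Ioi m)) ^ 2 ≠ ∞ := by
  have hsum : Summable fun m : ℕ => (2 ^ s / m : ℝ) ^ 2 :=
    ((Real.summable_one_div_nat_pow.2 one_lt_two).mul_left ((2 ^ s) ^ 2)).congr fun m => by ring
  have hterm (m : ℕ) : (ν {m} / ν (Ioi m)) ^ 2 ≤ ENNReal.ofReal ((2 ^ s / m) ^ 2) := by
    rw [ENNReal.ofReal_pow (by positivity)]
    gcongr
    exact hν.measure_singleton_div_measure_Ioi_le hs hc m
  exact ne_top_of_le_ne_top hsum.tsum_ofReal_ne_top (ENNReal.tsum_le_tsum hterm)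

end IsPowerLaw

section IID

variable {Ω : Type*} [MeasurableSpace Ω] {μ : Measure Ω} {K : ℕ → Ω → ℕ}

theorem measure_biInter_preimage_eq_prod (hmeas : ∀ l, Measurable (K l))
    (hlaw : ∀ l, μ.map (K l) = ν) (hindep : iIndepFun K μ) (S : Finset ℕ) (s : ℕ → Set ℕ) :
    μ (⋂ l ∈ S, K l ⁻¹' s l) = ∏ l ∈ S, ν (s l) := by
  rw [hindep.measure_inter_preimage_eq_mul S (fun _ _ => MeasurableSet.of_discrete)]
  refine Finset.prod_congr rfl fun l _ => ?_
  rw [← hlaw l, Measure.map_apply (hmeas l) MeasurableSet.of_discrete]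

theorem measure_forall_le_le (hmeas : ∀ l, Measurable (K l))
    (hlaw : ∀ l, μ.map (K l) = ν) (hindep : iIndepFun K μ) (i m : ℕ) :
    μ {ω | ∀ l ≤ i, K l ω ≤ m} = ν (Iic m) ^ (i + 1) := by
  have hset : {ω | ∀ l ≤ i, K l ω ≤ m} = ⋂ l ∈ Finset.range (i + 1), K l ⁻¹' Iic m := by
    ext ω; simp
  rw [hset, measure_biInter_preimage_eq_prod hmeas hlaw hindep, Finset.prod_const,
    Finset.card_range]

theorem ae_eventually_exists_lt (hmeas : ∀ l, Measurable (K l))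
    (hlaw : ∀ l, μ.map (K l) = ν) (hindep : iIndepFun K μ)
    (hsum : ∑' i, ν (Iic i) ^ (i + 1) ≠ ∞) :
    ∀ᵐ ω ∂μ, ∀ᶠ i in atTop, ∃ j ≤ i, i < K j ω := by
  simp_rw [← measure_forall_le_le hmeas hlaw hindep] at hsum
  filter_upwards [ae_eventually_notMem hsum] with ω hω
  filter_upwards [hω] with i hi
  simpa using hi

theorem measure_isTiedRecordTime_le (hmeas : ∀ l, Measurable (K l))
    (hlaw : ∀ l, μ.map (K l) = ν) (hindep : iIndepFun K μ) (j : ℕ) :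
    μ {ω | IsTiedRecordTime (K · ω) j} ≤ j * ∑' m, ν {m} ^ 2 * ν (Iic m) ^ (j - 1) := by
  classical
  set tie : ℕ → ℕ → ℕ → Set ℕ := fun i m l => if l = i ∨ l = j then ({m} : Set ℕ) else Iic m
  have hsub : {ω | IsTiedRecordTime (K · ω) j} ⊆
      ⋃ i ∈ Finset.range j, ⋃ m, ⋂ l ∈ Finset.range (j + 1), K l ⁻¹' tie i m l := by
    rintro ω ⟨hrec, i, hij, htie⟩
    simp only [mem_iUnion, mem_iInter, Finset.mem_range, mem_preimage]
    refine ⟨i, hij, K j ω, fun l hl => ?_⟩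
    by_cases hl' : l = i ∨ l = j
    · rcases hl' with rfl | rfl <;> simp [tie, htie]
    · simpa [tie, hl'] using hrec l (by omega)
  have hprod : ∀ i < j, ∀ m, ∏ l ∈ Finset.range (j + 1), ν (tie i m l) =
      ν {m} ^ 2 * ν (Iic m) ^ (j - 1) := by
    intro i hij m
    have hpair : (Finset.range (j + 1)).filter (fun l => l = i ∨ l = j) = {i, j} := by
      ext l; simp; omega
    have hcard := Finset.card_filter_add_card_filter_not (s := Finset.range (j + 1))
      (fun l => l = i ∨ l = j)
    rw [hpair, Finset.card_pair hij.ne, Finset.card_range] at hcard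
    simp only [tie, apply_ite ν, Finset.prod_ite, Finset.prod_const, hpair,
      Finset.card_pair hij.ne]
    congr 2; omega
  calc μ {ω | IsTiedRecordTime (K · ω) j}
      ≤ ∑ i ∈ Finset.range j, ∑' m, μ (⋂ l ∈ Finset.range (j + 1), K l ⁻¹' tie i m l) :=
        (measure_mono hsub).trans <| (measure_biUnion_finset_le _ _).trans <|
          Finset.sum_le_sum fun i _ => measure_iUnion_le _
    _ = ∑ i ∈ Finset.range j, ∑' m, ν {m} ^ 2 * ν (Iic m) ^ (j - 1) := by
        refine Finset.sum_congr rfl fun i hi => tsum_congr fun m => ?_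
        rw [measure_biInter_preimage_eq_prod hmeas hlaw hindep,
          hprod i (Finset.mem_range.1 hi) m]
    _ = j * ∑' m, ν {m} ^ 2 * ν (Iic m) ^ (j - 1) := by simp

theorem ae_eventually_isSimpleRecordTime [IsProbabilityMeasure ν]
    (hmeas : ∀ l, Measurable (K l)) (hlaw : ∀ l, μ.map (K l) = ν) (hindep : iIndepFun K μ)
    (hsum : ∑' m, (ν {m} / ν (Ioi m)) ^ 2 ≠ ∞) :
    ∀ᵐ ω ∂μ, ∀ᶠ i in atTop, IsRecordTime (K · ω) i → IsSimpleRecordTime (K · ω) i := by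
  have htie : ∑' j, μ {ω | IsTiedRecordTime (K · ω) j} ≠ ∞ := by
    refine ne_top_of_le_ne_top hsum ?_
    calc ∑' j, μ {ω | IsTiedRecordTime (K · ω) j}
        ≤ ∑' j : ℕ, j * ∑' m, ν {m} ^ 2 * ν (Iic m) ^ (j - 1) :=
          ENNReal.tsum_le_tsum (measure_isTiedRecordTime_le hmeas hlaw hindep)
      _ = ∑' m, ν {m} ^ 2 * ∑' n : ℕ, ((n : ℝ≥0∞) + 1) * ν (Iic m) ^ n := by
          simp_rw [← ENNReal.tsum_mul_left]
          rw [ENNReal.tsum_comm]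
          refine tsum_congr fun m => ?_
          rw [tsum_eq_zero_add' ENNReal.summable]
          simp only [Nat.cast_zero, zero_mul, zero_add, Nat.cast_add_one, add_tsub_cancel_right]
          exact tsum_congr fun n => by ring
      _ = ∑' m, (ν {m} / ν (Ioi m)) ^ 2 := by
          simp_rw [ENNReal.tsum_add_one_mul_pow, ← prob_compl_eq_one_sub measurableSet_Iic,
            compl_Iic, div_eq_mul_inv, mul_pow]
  filter_upwards [ae_eventually_notMem htie] with ω hω
  exact eventually_isSimpleRecordTime hω

theorem ae_eventually_isSimpleRecordTime_and_exists_lt [IsProbabilityMeasure ν] {s c : ℝ}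
    (hν : IsPowerLaw ν s c) (hs₁ : 1 < s) (hs₂ : s < 2)
    (hmeas : ∀ l, Measurable (K l)) (hlaw : ∀ l, μ.map (K l) = ν) (hindep : iIndepFun K μ) :
    ∀ᵐ ω ∂μ, ∀ᶠ i in atTop,
      (IsRecordTime (K · ω) i → IsSimpleRecordTime (K · ω) i) ∧ ∃ j ≤ i, i < K j ω := by
  have hc := hν.pos
  have hsimple := ae_eventually_isSimpleRecordTime hmeas hlaw hindep
    (hν.tsum_measure_singleton_div_measure_Ioi_sq_ne_top (by linarith) hc)
  have hlarge := ae_eventually_exists_lt hmeas hlaw hindep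
    (tsum_measure_Iic_pow_ne_top (by positivity) (by linarith) (hν.ofReal_le_measure_Ioi hs₁ hc))
  filter_upwards [hsimple, hlarge] with ω h₁ h₂
  exact h₁.and h₂

end IID

theorem records_eventually_simple_and_large_general
    {Ω : Type*} [MeasurableSpace Ω] (μ : Measure Ω) [IsProbabilityMeasure μ]
    (c : ℝ)
    (K : ℕ → Ω → ℕ) (hmeas : ∀ i, Measurable (K i))
    (hpos : ∀ i ω, 1 ≤ K i ω)
    (hindep : iIndepFun K μ)
    (hdist : ∀ i, ∀ k : ℕ, 1 ≤ k →
      μ {ω | K i ω = k} = ENNReal.ofReal ((k : ℝ) ^ (-(5 / 4 : ℝ)) / c)) :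
    ∀ᵐ ω ∂μ, ∃ i₀ : ℕ, ∀ i ≥ i₀,
      (IsRecordTime (fun n => K n ω) i → IsSimpleRecordTime (fun n => K n ω) i) ∧
      (∃ j ≤ i, i < K j ω) := by
  have hpowerLaw (l : ℕ) : IsPowerLaw (μ.map (K l)) (5 / 4) c := by
    intro k
    rw [Measure.map_apply (hmeas l) (measurableSet_singleton k)]
    rcases k.eq_zero_or_pos with rfl | hk
    · have hempty : K l ⁻¹' {0} = ∅ :=
        eq_empty_of_forall_notMem fun ω h => Nat.one_le_iff_ne_zero.1 (hpos l ω) h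
      simp [hempty, Real.zero_rpow]
    · exact hdist l k hk
  have hlaw (l : ℕ) : μ.map (K l) = μ.map (K 0) :=
    Measure.ext_of_singleton fun k => by rw [hpowerLaw l, hpowerLaw 0]
  have : IsProbabilityMeasure (μ.map (K 0)) :=
    Measure.isProbabilityMeasure_map (hmeas 0).aemeasurable
  filter_upwards [ae_eventually_isSimpleRecordTime_and_exists_lt (hpowerLaw 0)
    (by norm_num) (by norm_num) hmeas hlaw hindep] with ω hω
  exact eventually_atTop.1 hω

/-- For an i.i.d. sequence `(K_i)` of positive-integer-valued random variables with
`Pr(K_i = k) = k^(-5/4)/c`, almost surely there is `i₀` such that every record time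
`i ≥ i₀` is simple and `max{k_0, …, k_i} > i` for all `i ≥ i₀`. -/
theorem records_eventually_simple_and_large
    {Ω : Type*} [MeasurableSpace Ω] (μ : Measure Ω) [IsProbabilityMeasure μ]
    (c : ℝ) (hc : c = ∑' k : ℕ, (k : ℝ) ^ (-(5 / 4 : ℝ)))
    (K : ℕ → Ω → ℕ) (hmeas : ∀ i, Measurable (K i))
    (hpos : ∀ i ω, 1 ≤ K i ω)
    (hindep : iIndepFun K μ)
    (hdist : ∀ i, ∀ k : ℕ, 1 ≤ k →
      μ {ω | K i ω = k} = ENNReal.ofReal ((k : ℝ) ^ (-(5 / 4 : ℝ)) / c)) :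
    ∀ᵐ ω ∂μ, ∃ i₀ : ℕ, ∀ i ≥ i₀,
      (IsRecordTime (fun n => K n ω) i → IsSimpleRecordTime (fun n => K n ω) i) ∧
      (∃ j ≤ i, i < K j ω) :=
  records_eventually_simple_and_large_general μ c K hmeas hpos hindep hdist
end

section
/- Let $((K_i, Y_i))_{i \in \mathbb{N}}$ be an i.i.d. sequence of copies of the pair $(K, Y)$, where $\Pr(K = k) = k^{-5/4}/c$ with $c = \sum_{k \geq 1} k^{-5/4}$, and conditionally on $K = k$, $Y = \text{red}$ with probability $2^{-k}$ and $Y = \text{blue}$ with probability $1 - 2^{-k}$. Then almost every trajectory $(k_i, y_i)$ stabilizes: there exists $i_0$ such that for all $i > i_0$: (1) a maximal value $k_m$ among $k_1, \ldots, k_i$ is a simple record; (2) $\max\{k_1, \ldots, k_i\} > i$; and (3) $y_m = \text{blue}$ for the maximal record-time $m$ on the segment $1, \ldots, i$. -/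
/-!
Three Borel–Cantelli estimates. Since `P(K > n) ≥ n · P(K = 2n) ≍ n^(-1/4)`, the probability
that all of `K_0, …, K_(i-1)` are at most `i²` is at most `exp(-b √i)`. Since the point masses
beyond `j²` are at most `j^(-5/2)`, the probability that `K_j > j²` repeats an earlier value is at
most `j^(-3/2)`. The probability that `K_i > i` while `Y_i` is red is at most `2^(-i)`. So almost
surely none of these events happens after some time `N`. From then on a non-strict record time
`j` has `K_j > j²` by the first estimate, so by the second it repeats no earlier value and is a
record time. Hence for large `i` the maximum of `K_0, …, K_i` is attained at a unique time
`m ≥ N`, which is a simple record time, and `K_m > i ≥ m` forces `Y_m` to be blue by the third.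
-/

open MeasureTheory ProbabilityTheory Filter

/-- The two colours of the auxiliary variable `Y`. -/
inductive Color : Type
  | red : Color
  | blue : Color
  deriving DecidableEq

instance : MeasurableSpace Color := ⊤

section Records

variable {k : ℕ → ℕ} {N : ℕ}

theorem IsNonStrictRecordTime.isRecordTime_of_eventually
    (hgrow : ∀ i ≥ N, ∃ j < i, i ^ 2 < k j) (htie : ∀ j ≥ N, ∀ m < j, k m = k j → k j ≤ j ^ 2)
    {j : ℕ} (hj : N ≤ j) (hrec : IsNonStrictRecordTime k j) : IsRecordTime k j := by
  obtain ⟨l, hlj, hl⟩ := hgrow j hj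
  intro m hm
  refine (hrec m hm).lt_of_ne fun heq => ?_
  have := htie j hj m hm heq
  have := hrec l hlj
  omega

theorem IsNonStrictRecordTime.isSimpleRecordTime_of_eventually
    (hgrow : ∀ i ≥ N, ∃ j < i, i ^ 2 < k j) (htie : ∀ j ≥ N, ∀ m < j, k m = k j → k j ≤ j ^ 2)
    {m : ℕ} (hm : N ≤ m) (hrec : IsNonStrictRecordTime k m) : IsSimpleRecordTime k m :=
  ⟨hrec.isRecordTime_of_eventually hgrow htie hm, fun _ hj hrecj =>
    hrecj.isRecordTime_of_eventually hgrow htie (hm.trans hj.le) m hj⟩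

theorem exists_isSimpleRecordTime_of_eventually (y : ℕ → Color)
    (hgrow : ∀ i ≥ N, ∃ j < i, i ^ 2 < k j) (htie : ∀ j ≥ N, ∀ m < j, k m = k j → k j ≤ j ^ 2)
    (hblue : ∀ i ≥ N, i < k i → y i = Color.blue) :
    ∃ i₀ : ℕ, ∀ i > i₀, ∃ m ≤ i,
      (∀ j ≤ i, j ≠ m → k j < k m) ∧ IsSimpleRecordTime k m ∧ y m = Color.blue ∧ i < k m := by
  refine ⟨N + (Finset.range N).sup k, fun i hi => ?_⟩
  obtain ⟨m, hmi, hmax⟩ := (Finset.range (i + 1)).exists_max_image k ⟨0, by simp⟩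
  simp only [Finset.mem_range, Nat.lt_succ_iff] at hmi hmax
  have hrec : IsNonStrictRecordTime k m := fun j hj => hmax j (hj.le.trans hmi)
  have hbig : i < k m := by
    obtain ⟨l, hl, hkl⟩ := hgrow (i + 1) (by omega)
    have := hmax l (by omega)
    nlinarith
  have hNm : N ≤ m := by
    by_contra! hmN
    have := Finset.le_sup (f := k) (Finset.mem_range.2 hmN)
    omega
  refine ⟨m, hmi, fun j hj hjm => ?_, hrec.isSimpleRecordTime_of_eventually hgrow htie hNm,
    hblue m hNm (by omega), hbig⟩
  rcases hjm.lt_or_gt with hjm | hmj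
  · exact hrec.isRecordTime_of_eventually hgrow htie hNm j hjm
  · refine (hmax j hj).lt_of_ne fun heq => ?_
    have hrecj : IsNonStrictRecordTime k j := fun l hl => heq ▸ hmax l (by omega)
    exact (hrecj.isRecordTime_of_eventually hgrow htie (by omega) m hmj).ne heq.symm

end Records

section Analysis

theorem summable_exp_neg_mul_sqrt {b : ℝ} (hb : 0 < b) :
    Summable fun n : ℕ => Real.exp (-(b * √n)) := by
  refine ((Real.summable_one_div_nat_pow.2 one_lt_two).mul_left (24 / b ^ 4))
    |>.of_norm_bounded_eventually_nat ?_
  filter_upwards [eventually_gt_atTop 0] with n hn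
  have hx : 0 < b * √n := by positivity
  have h4 : (b * √n) ^ 4 = b ^ 4 * (n : ℝ) ^ 2 := by
    rw [mul_pow, show √(n : ℝ) ^ 4 = (√n ^ 2) ^ 2 by ring, Real.sq_sqrt n.cast_nonneg]
  calc ‖Real.exp (-(b * √n))‖ = (Real.exp (b * √n))⁻¹ := by
        rw [Real.norm_of_nonneg (Real.exp_nonneg _), Real.exp_neg]
    _ ≤ ((b * √n) ^ 4 / 24)⁻¹ := inv_anti₀ (by positivity) <| by
        simpa [Nat.factorial] using Real.pow_div_factorial_le_exp _ hx.le 4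
    _ = 24 / b ^ 4 * (1 / (n : ℝ) ^ 2) := by rw [h4]; field_simp

theorem one_le_tsum_nat_rpow_neg {s : ℝ} (hs : 1 < s) : 1 ≤ ∑' k : ℕ, (k : ℝ) ^ (-s) := by
  simpa using (Real.summable_nat_rpow.2 (by linarith : -s < -1)).le_tsum 1
    fun k _ => by positivity

theorem antitoneOn_nat_rpow_neg_div {s c : ℝ} (hs : 0 ≤ s) (hc : 0 ≤ c) :
    AntitoneOn (fun k : ℕ => (k : ℝ) ^ (-s) / c) (Set.Ici 1) := fun a ha _ _ hab =>
  div_le_div_of_nonneg_right (Real.rpow_le_rpow_of_nonpos (by exact_mod_cast ha)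
    (by exact_mod_cast hab) (by linarith)) hc

theorem mul_sq_mul_rpow_two_mul_sq {x : ℝ} (hx : 0 ≤ x) (c : ℝ) :
    x * (x ^ 2 * ((2 * x ^ 2) ^ (-(5 / 4 : ℝ)) / c)) = 2 ^ (-(5 / 4 : ℝ)) / c * √x := by
  rcases hx.eq_or_lt with rfl | hx
  · simp
  have h : x ^ 3 * (x ^ 2) ^ (-(5 / 4 : ℝ)) = √x := by
    rw [Real.sqrt_eq_rpow, ← Real.rpow_natCast x 2, ← Real.rpow_mul hx.le,
      ← Real.rpow_natCast x 3, ← Real.rpow_add hx]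
    norm_num
  rw [Real.mul_rpow zero_le_two (by positivity), ← h]
  ring

theorem mul_rpow_sq_add_one_le {x c : ℝ} (hx : 0 ≤ x) (hc : 1 ≤ c) :
    x * ((x ^ 2 + 1) ^ (-(5 / 4 : ℝ)) / c) ≤ x ^ (-(3 / 2 : ℝ)) := by
  rcases hx.eq_or_lt with rfl | hx
  · simp
  calc x * ((x ^ 2 + 1) ^ (-(5 / 4 : ℝ)) / c) ≤ x * (x ^ 2) ^ (-(5 / 4 : ℝ)) := by
        gcongr x * ?_
        exact (div_le_self (by positivity) hc).trans
          (Real.rpow_le_rpow_of_nonpos (by positivity) (by linarith) (by norm_num))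
    _ = x ^ (-(3 / 2 : ℝ)) := by
        rw [← Real.rpow_natCast x 2, ← Real.rpow_mul hx.le]
        nth_rw 1 [← Real.rpow_one x]
        rw [← Real.rpow_add hx]
        norm_num

end Analysis

section Probability

open scoped ENNReal

variable {Ω : Type*} [MeasurableSpace Ω] {μ : Measure Ω}

theorem ae_eventually_notMem_of_summable [IsFiniteMeasure μ] {s : ℕ → Set Ω} {f : ℕ → ℝ}
    (hf : Summable f) (hs : ∀ i, μ.real (s i) ≤ f i) : ∀ᵐ ω ∂μ, ∀ᶠ i in atTop, ω ∉ s i := by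
  refine ae_eventually_notMem (ne_top_of_le_ne_top (b := ∑' i, ENNReal.ofReal (f i)) ?_ ?_)
  · rw [← ENNReal.ofReal_tsum_of_nonneg (fun i => measureReal_nonneg.trans (hs i)) hf]
    exact ENNReal.ofReal_ne_top
  · refine ENNReal.tsum_le_tsum fun i => ?_
    rw [← ofReal_measureReal]
    exact ENNReal.ofReal_le_ofReal (hs i)

theorem measure_inter_preimage_le_mul {β : Type*} [Countable β] [MeasurableSpace β]
    [MeasurableSingletonClass β] {X : Ω → β} (hX : Measurable X) {A : Set Ω} {s : Set β}
    {ε : ℝ≥0∞} (h : ∀ b ∈ s, μ (A ∩ X ⁻¹' {b}) ≤ ε * μ (X ⁻¹' {b})) :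
    μ (A ∩ X ⁻¹' s) ≤ ε * μ (X ⁻¹' s) :=
  calc μ (A ∩ X ⁻¹' s) = μ (⋃ b ∈ s, A ∩ X ⁻¹' {b}) := by
        rw [← Set.inter_iUnion₂, Set.biUnion_preimage_singleton]
    _ ≤ ∑' b : s, μ (A ∩ X ⁻¹' {(b : β)}) := measure_biUnion_le μ s.to_countable _
    _ ≤ ∑' b : s, ε * μ (X ⁻¹' {(b : β)}) := ENNReal.tsum_le_tsum fun b => h b b.2
    _ = ε * μ (X ⁻¹' s) := by
        rw [ENNReal.tsum_mul_left, tsum_measure_preimage_singleton s.to_countable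
          fun _ _ => hX (measurableSet_singleton _)]

variable [IsProbabilityMeasure μ] {p : ℕ → ℝ}

theorem mul_le_measureReal_lt {X : Ω → ℕ} (hX : Measurable X)
    (hlaw : ∀ k, μ.real (X ⁻¹' {k}) = p k) (hp : AntitoneOn p (Set.Ici 1)) (n : ℕ) :
    n * p (2 * n) ≤ μ.real {ω | n < X ω} :=
  calc n * p (2 * n) = ∑ _k ∈ Finset.Ioc n (2 * n), p (2 * n) := by
        rw [Finset.sum_const, Nat.card_Ioc, nsmul_eq_mul]; congr 2; omega
    _ ≤ ∑ k ∈ Finset.Ioc n (2 * n), p k := Finset.sum_le_sum fun k hk => by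
        rw [Finset.mem_Ioc] at hk
        exact hp (Set.mem_Ici.2 (by omega)) (Set.mem_Ici.2 (by omega)) hk.2
    _ = μ.real (X ⁻¹' Finset.Ioc n (2 * n)) := by
        simp_rw [← hlaw]
        exact sum_measureReal_preimage_singleton _ fun _ _ => hX (measurableSet_singleton _)
    _ ≤ μ.real {ω | n < X ω} := measureReal_mono fun ω hω => by simp_all

theorem measureReal_forall_le_le_exp {K : ℕ → Ω → ℕ} (hK : ∀ i, Measurable (K i))
    (hind : iIndepFun K μ) (hlaw : ∀ i k, μ.real (K i ⁻¹' {k}) = p k)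
    (hp : AntitoneOn p (Set.Ici 1)) (i n : ℕ) :
    μ.real {ω | ∀ j < i, K j ω ≤ n} ≤ Real.exp (-(i * (n * p (2 * n)))) := by
  have hone : ∀ j, μ.real (K j ⁻¹' Set.Iic n) ≤ Real.exp (-(n * p (2 * n))) := by
    intro j
    have hcompl : K j ⁻¹' Set.Iic n = {ω | n < K j ω}ᶜ := by ext; simp
    rw [hcompl, probReal_compl_eq_one_sub (measurableSet_lt measurable_const (hK j))]
    linarith [mul_le_measureReal_lt (hK j) (hlaw j) hp n, Real.add_one_le_exp (-(n * p (2 * n)))]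
  have hset : {ω | ∀ j < i, K j ω ≤ n} = ⋂ j ∈ Finset.range i, K j ⁻¹' Set.Iic n := by
    ext; simp
  rw [hset, measureReal_def, hind.measure_inter_preimage_eq_mul _ fun _ _ => measurableSet_Iic,
    ENNReal.toReal_prod]
  calc ∏ j ∈ Finset.range i, (μ (K j ⁻¹' Set.Iic n)).toReal
      ≤ ∏ _j ∈ Finset.range i, Real.exp (-(n * p (2 * n))) :=
        Finset.prod_le_prod (fun _ _ => ENNReal.toReal_nonneg) fun j _ => hone j
    _ = Real.exp (-(i * (n * p (2 * n)))) := by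
        rw [Finset.prod_const, Finset.card_range, ← Real.exp_nat_mul]; ring_nf

theorem measureReal_exists_tie_le {K : ℕ → Ω → ℕ} (hK : ∀ i, Measurable (K i))
    (hind : iIndepFun K μ) (hlaw : ∀ i k, μ.real (K i ⁻¹' {k}) = p k)
    (hp : AntitoneOn p (Set.Ici 1)) (j n : ℕ) :
    μ.real {ω | ∃ m < j, K m ω = K j ω ∧ n < K j ω} ≤ j * p (n + 1) := by
  have hp0 : 0 ≤ p (n + 1) := hlaw 0 (n + 1) ▸ measureReal_nonneg
  have htie : ∀ m < j, μ.real ({ω | K m ω = K j ω} ∩ K j ⁻¹' Set.Ioi n) ≤ p (n + 1) := by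
    intro m hm
    refine ENNReal.toReal_le_of_le_ofReal hp0 ?_
    calc μ ({ω | K m ω = K j ω} ∩ K j ⁻¹' Set.Ioi n)
        ≤ ENNReal.ofReal (p (n + 1)) * μ (K j ⁻¹' Set.Ioi n) := by
          refine measure_inter_preimage_le_mul (hK j) fun k hk => ?_
          have hfiber : {ω | K m ω = K j ω} ∩ K j ⁻¹' {k} = K m ⁻¹' {k} ∩ K j ⁻¹' {k} := by
            ext ω; simp +contextual [and_comm]
          rw [hfiber, (hind.indepFun hm.ne).measure_inter_preimage_eq_mul _ _
            (measurableSet_singleton k) (measurableSet_singleton k), ← ofReal_measureReal, hlaw]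
          gcongr
          exact hp (Set.mem_Ici.2 (by omega)) (Set.mem_Ici.2 (by simp at hk; omega)) hk
      _ ≤ ENNReal.ofReal (p (n + 1)) := mul_le_of_le_one_right' prob_le_one
  have hset : {ω | ∃ m < j, K m ω = K j ω ∧ n < K j ω}
      = ⋃ m ∈ Finset.range j, {ω | K m ω = K j ω} ∩ K j ⁻¹' Set.Ioi n := by
    ext; simp [and_left_comm]
  rw [hset]
  calc _ ≤ ∑ m ∈ Finset.range j, μ.real ({ω | K m ω = K j ω} ∩ K j ⁻¹' Set.Ioi n) :=
        measureReal_biUnion_finset_le _ _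
    _ ≤ ∑ _m ∈ Finset.range j, p (n + 1) :=
        Finset.sum_le_sum fun m hm => htie m (Finset.mem_range.1 hm)
    _ = j * p (n + 1) := by simp

end Probability

section Colors

variable {Ω : Type*} [MeasurableSpace Ω] {μ : Measure Ω} {X : Ω → ℕ} {Y : Ω → Color}
  {w : ℕ → ℝ}

theorem measureReal_preimage_singleton_of_colors (hXY : Measurable fun ω => (X ω, Y ω))
    (hpos : ∀ ω, 1 ≤ X ω) (hw0 : w 0 = 0) (hw : ∀ k, 0 ≤ w k)
    (hred : ∀ k, 1 ≤ k → μ {ω | X ω = k ∧ Y ω = Color.red} = ENNReal.ofReal (2⁻¹ ^ k * w k))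
    (hblue : ∀ k, 1 ≤ k →
      μ {ω | X ω = k ∧ Y ω = Color.blue} = ENNReal.ofReal ((1 - 2⁻¹ ^ k) * w k))
    (k : ℕ) : μ.real (X ⁻¹' {k}) = w k := by
  rw [measureReal_def, ← ENNReal.toReal_ofReal (hw k)]
  congr 1
  rcases Nat.eq_zero_or_pos k with rfl | hk
  · rw [hw0, ENNReal.ofReal_zero, measure_eq_zero_iff_ae_notMem]
    exact ae_of_all _ fun ω hω => by have := hpos ω; simp_all
  have hsplit : X ⁻¹' {k} =
      {ω | X ω = k ∧ Y ω = Color.red} ∪ {ω | X ω = k ∧ Y ω = Color.blue} := by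
    ext ω; cases h : Y ω <;> simp [h]
  have hdisj : Disjoint {ω | X ω = k ∧ Y ω = Color.red} {ω | X ω = k ∧ Y ω = Color.blue} :=
    Set.disjoint_left.2 fun ω h1 h2 => by simp_all
  have hmeas : MeasurableSet {ω | X ω = k ∧ Y ω = Color.blue} :=
    hXY ((measurableSet_singleton k).prod (MeasurableSpace.measurableSet_top (s := {Color.blue})))
  have hpow : (2⁻¹ : ℝ) ^ k ≤ 1 := pow_le_one₀ (by norm_num) (by norm_num)
  rw [hsplit, measure_union hdisj hmeas, hred k hk, hblue k hk,
    ← ENNReal.ofReal_add (mul_nonneg (by positivity) (hw k)) (mul_nonneg (by linarith) (hw k))]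
  congr 1
  ring

theorem measureReal_red_and_lt_le [IsProbabilityMeasure μ] (hX : Measurable X)
    (hlaw : ∀ k, μ.real (X ⁻¹' {k}) = w k)
    (hred : ∀ k, 1 ≤ k → μ {ω | X ω = k ∧ Y ω = Color.red} = ENNReal.ofReal (2⁻¹ ^ k * w k))
    (i : ℕ) : μ.real {ω | Y ω = Color.red ∧ i < X ω} ≤ 2⁻¹ ^ i := by
  refine ENNReal.toReal_le_of_le_ofReal (by positivity) ?_
  calc μ {ω | Y ω = Color.red ∧ i < X ω}
      = μ ({ω | Y ω = Color.red} ∩ X ⁻¹' Set.Ioi i) := rfl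
    _ ≤ ENNReal.ofReal (2⁻¹ ^ i) * μ (X ⁻¹' Set.Ioi i) := by
        refine measure_inter_preimage_le_mul hX fun k hk => ?_
        have hk : i < k := hk
        have hfiber : {ω | Y ω = Color.red} ∩ X ⁻¹' {k} = {ω | X ω = k ∧ Y ω = Color.red} := by
          ext ω; simp [and_comm]
        rw [hfiber, hred k (by omega), ENNReal.ofReal_mul (by positivity), ← hlaw,
          ofReal_measureReal]
        gcongr ?_ * _
        exact ENNReal.ofReal_le_ofReal (pow_le_pow_of_le_one (by norm_num) (by norm_num) hk.le)
    _ ≤ ENNReal.ofReal (2⁻¹ ^ i) := mul_le_of_le_one_right' prob_le_one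

end Colors

/-- For an i.i.d. sequence of pairs `(K_i, Y_i)` where `Pr(K = k) = k^(-5/4)/c` and,
conditionally on `K = k`, `Y = red` with probability `2⁻ᵏ` and `Y = blue` with
probability `1 - 2⁻ᵏ`, almost every trajectory stabilizes: there is `i₀` such that for
every `i > i₀` there is a time `m ≤ i` at which the (unique) maximal value among
`k_0, …, k_i` is attained, `m` is a simple record time, `y_m = blue`, and
`max{k_0, …, k_i} > i`. -/
theorem trajectories_stabilize
    {Ω : Type*} [MeasurableSpace Ω] (μ : Measure Ω) [IsProbabilityMeasure μ]
    (c : ℝ) (hc : c = ∑' k : ℕ, (k : ℝ) ^ (-(5 / 4 : ℝ)))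
    (K : ℕ → Ω → ℕ) (Y : ℕ → Ω → Color)
    (hmeas : ∀ i, Measurable (fun ω => (K i ω, Y i ω)))
    (hpos : ∀ i ω, 1 ≤ K i ω)
    (hindep : iIndepFun (fun i ω => (K i ω, Y i ω)) μ)
    (hdistRed : ∀ i, ∀ k : ℕ, 1 ≤ k →
      μ {ω | K i ω = k ∧ Y i ω = Color.red} =
        ENNReal.ofReal ((2 : ℝ)⁻¹ ^ k * ((k : ℝ) ^ (-(5 / 4 : ℝ)) / c)))
    (hdistBlue : ∀ i, ∀ k : ℕ, 1 ≤ k →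
      μ {ω | K i ω = k ∧ Y i ω = Color.blue} =
        ENNReal.ofReal ((1 - (2 : ℝ)⁻¹ ^ k) * ((k : ℝ) ^ (-(5 / 4 : ℝ)) / c))) :
    ∀ᵐ ω ∂μ, ∃ i₀ : ℕ, ∀ i > i₀, ∃ m ≤ i,
      (∀ j ≤ i, j ≠ m → K j ω < K m ω) ∧
      IsSimpleRecordTime (fun n => K n ω) m ∧
      Y m ω = Color.blue ∧
      i < K m ω := by
  set w : ℕ → ℝ := fun k => (k : ℝ) ^ (-(5 / 4 : ℝ)) / c
  have hc1 : 1 ≤ c := hc ▸ one_le_tsum_nat_rpow_neg (by norm_num)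
  have hK : ∀ i, Measurable (K i) := fun i => measurable_fst.comp (hmeas i)
  have hindK : iIndepFun K μ := hindep.comp (fun _ => Prod.fst) fun _ => measurable_fst
  have hlaw : ∀ i k, μ.real (K i ⁻¹' {k}) = w k := fun i =>
    measureReal_preimage_singleton_of_colors (hmeas i) (hpos i) (by simp [w])
      (fun k => by positivity) (hdistRed i) (hdistBlue i)
  have hanti : AntitoneOn w (Set.Ici 1) := antitoneOn_nat_rpow_neg_div (by norm_num) (by positivity)
  have hgrow := ae_eventually_notMem_of_summable
    (summable_exp_neg_mul_sqrt (by positivity : 0 < 2 ^ (-(5 / 4 : ℝ)) / c)) fun i =>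
      (measureReal_forall_le_le_exp hK hindK hlaw hanti i (i ^ 2)).trans_eq (by
        simp only [w]; push_cast; rw [mul_sq_mul_rpow_two_mul_sq i.cast_nonneg])
  have htie := ae_eventually_notMem_of_summable
    (Real.summable_nat_rpow.2 (by norm_num : -(3 / 2 : ℝ) < -1)) fun j =>
      (measureReal_exists_tie_le hK hindK hlaw hanti j (j ^ 2)).trans (by
        simp only [w]; push_cast; exact mul_rpow_sq_add_one_le j.cast_nonneg hc1)
  have hred := ae_eventually_notMem_of_summable
    (summable_geometric_of_lt_one (by norm_num) (by norm_num : (2 : ℝ)⁻¹ < 1)) fun i =>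
      measureReal_red_and_lt_le (hK i) (hlaw i) (hdistRed i) i
  filter_upwards [hgrow, htie, hred] with ω hgrowω htieω hredω
  obtain ⟨N, hN⟩ := (hgrowω.and (htieω.and hredω)).exists_forall_of_atTop
  refine exists_isSimpleRecordTime_of_eventually (N := N) _ (fun i hi => ?_) (fun j hj => ?_)
    fun i hi hlt => ?_
  · simpa using (hN i hi).1
  · simpa using (hN j hj).2.1
  · cases hy : Y i ω
    · exact absurd ⟨hy, hlt⟩ (hN i hi).2.2
    · rfl
end

section
/- Let $G_1, G_2$ be groups and $i \geq 1$ an integer. For $j = 1, 2$, let $A_j, F_j, S_j$ be finite subsets of $G_j$ with $1 \in A_j$, with $|S_j| = |F_{3-j}|$, and fix bijections $\psi_j : F_{3-j} \to S_j$. Suppose $b_j' \in G_j$ is an $(A_j \cup S_j \cup F_j)^{i+2}$-switcher and $b_j'' \in G_j$ is an $(A_j \cup S_j \cup F_j \cup \{b_j'\})^{2i+8}$-switcher. If an element $g \in G_1 \times G_2$ can be presented in the form $g = (q_1' f_1 b_1' \psi_1(f_2) b_1'' q_1'', \; q_2' f_2 b_2' \psi_2(f_1) b_2'' q_2'')$ with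 $q_j' \in A_j^{i+1}$, $f_j \in F_j$, $q_j'' \in A_j^{i}$ for $j = 1, 2$, then this presentation is unique: the elements $q_1', q_2', f_1, f_2, q_1'', q_2''$ are uniquely determined by $g$. -/
open Pointwise
private lemma mem_pow_of_le' {G : Type*} [Group G] {A : Set G} (h1 : (1:G) ∈ A)
    {m n : ℕ} (hmn : m ≤ n) {x : G} (hx : x ∈ A ^ m) : x ∈ A ^ n := by
  obtain ⟨k, rfl⟩ := Nat.exists_eq_add_of_le hmn
  rw [pow_add]
  exact ⟨x, hx, 1, Set.one_mem_pow h1, mul_one x⟩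

/-- One-coordinate version. -/
private lemma coord_lemma {G : Type*} [Group G] {A F S : Set G}
    (h1 : (1:G) ∈ A) {i : ℕ} {b' b'' : G}
    (hb' : IsSwitcher ((A ∪ S ∪ F) ^ (i + 2)) b')
    (hb'' : IsSwitcher ((A ∪ S ∪ F ∪ {b'}) ^ (2 * i + 8)) b'')
    {q' r' f e q'' r'' s t : G}
    (hq' : q' ∈ A ^ (i + 1)) (hr' : r' ∈ A ^ (i + 1))
    (hf : f ∈ F) (he : e ∈ F) (hs : s ∈ S) (ht : t ∈ S)
    (hq'' : q'' ∈ A ^ i) (hr'' : r'' ∈ A ^ i)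
    (heq : q' * f * b' * s * b'' * q'' = r' * e * b' * t * b'' * r'') :
    q' * f = r' * e ∧ s = t ∧ q'' = r'' := by
  set X : Set G := A ∪ S ∪ F ∪ {b'} with hX
  have h1X : (1:G) ∈ X := Or.inl (Or.inl (Or.inl h1))
  have hAX : A ⊆ X := fun x hx => Or.inl (Or.inl (Or.inl hx))
  have hSX : S ⊆ X := fun x hx => Or.inl (Or.inl (Or.inr hx))
  have hFX : F ⊆ X := fun x hx => Or.inl (Or.inr hx)
  have hbX : b' ∈ X := Or.inr rfl
  have hmem : ∀ {a g u : G}, a ∈ A ^ (i+1) → g ∈ F → u ∈ S →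
      a * g * b' * u ∈ X ^ (2*i+8) := by
    intro a g u ha hg hu
    have : a * g * b' * u ∈ X ^ (i+1) * X * X * X :=
      Set.mul_mem_mul (Set.mul_mem_mul (Set.mul_mem_mul
        (Set.pow_subset_pow_left hAX ha) (hFX hg)) hbX) (hSX hu)
    rw [← pow_succ, ← pow_succ, ← pow_succ] at this
    exact mem_pow_of_le' h1X (by omega) this
  have hP : ∀ u ∈ A ^ i, u ∈ X ^ (2*i+8) := fun u hu =>
    mem_pow_of_le' h1X (by omega) (Set.pow_subset_pow_left hAX hu)
  have hL := hmem hq' hf hs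
  have hL' := hmem hr' he ht
  obtain ⟨heqL, heqR⟩ := hb''.2 _ hL _ (hP _ hq'') _ hL' _ (hP _ hr'') heq
  -- now use b'
  set Y : Set G := A ∪ S ∪ F with hY
  have h1Y : (1:G) ∈ Y := Or.inl (Or.inl h1)
  have hqf : ∀ {a g : G}, a ∈ A ^ (i+1) → g ∈ F → a * g ∈ Y ^ (i+2) := by
    intro a g ha hg
    have : a * g ∈ Y ^ (i+1) * Y := Set.mul_mem_mul
      (Set.pow_subset_pow_left (fun x hx => Or.inl (Or.inl hx)) ha) (Or.inr hg)
    rwa [← pow_succ] at this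
  have hsY : ∀ {u : G}, u ∈ S → u ∈ Y ^ (i+2) := by
    intro u hu
    exact mem_pow_of_le' h1Y (by omega) (by rw [pow_one]; exact Or.inl (Or.inr hu) : u ∈ Y ^ 1)
  obtain ⟨h3, h4⟩ := hb'.2 _ (hqf hq' hf) _ (hsY hs) _ (hqf hr' he) _ (hsY ht) heqL
  exact ⟨h3, h4, heqR⟩

/-- Unique decomposition lemma: if
`g = (q₁' f₁ b₁' ψ₁(f₂) b₁'' q₁'', q₂' f₂ b₂' ψ₂(f₁) b₂'' q₂'')` with
`qⱼ' ∈ Aⱼ^(i+1)`, `fⱼ ∈ Fⱼ`, `qⱼ'' ∈ Aⱼ^i`, then this presentation is unique. -/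
theorem unique_decomposition_switcher
    {G₁ G₂ : Type*} [Group G₁] [Group G₂] (i : ℕ) (hi : 1 ≤ i)
    (A₁ F₁ S₁ : Set G₁) (A₂ F₂ S₂ : Set G₂)
    (hA₁ : A₁.Finite) (hF₁ : F₁.Finite) (hS₁ : S₁.Finite)
    (hA₂ : A₂.Finite) (hF₂ : F₂.Finite) (hS₂ : S₂.Finite)
    (hone₁ : (1 : G₁) ∈ A₁) (hone₂ : (1 : G₂) ∈ A₂)
    (ψ₁ : G₂ → G₁) (hψ₁ : Set.BijOn ψ₁ F₂ S₁)
    (ψ₂ : G₁ → G₂) (hψ₂ : Set.BijOn ψ₂ F₁ S₂)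
    (b₁' b₁'' : G₁) (b₂' b₂'' : G₂)
    (hb₁' : IsSwitcher ((A₁ ∪ S₁ ∪ F₁) ^ (i + 2)) b₁')
    (hb₁'' : IsSwitcher ((A₁ ∪ S₁ ∪ F₁ ∪ {b₁'}) ^ (2 * i + 8)) b₁'')
    (hb₂' : IsSwitcher ((A₂ ∪ S₂ ∪ F₂) ^ (i + 2)) b₂')
    (hb₂'' : IsSwitcher ((A₂ ∪ S₂ ∪ F₂ ∪ {b₂'}) ^ (2 * i + 8)) b₂'')
    -- two presentations of the same element `g` of `G₁ × G₂`:
    (q₁' r₁' : G₁) (hq₁' : q₁' ∈ A₁ ^ (i + 1)) (hr₁' : r₁' ∈ A₁ ^ (i + 1))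
    (q₂' r₂' : G₂) (hq₂' : q₂' ∈ A₂ ^ (i + 1)) (hr₂' : r₂' ∈ A₂ ^ (i + 1))
    (f₁ e₁ : G₁) (hf₁ : f₁ ∈ F₁) (he₁ : e₁ ∈ F₁)
    (f₂ e₂ : G₂) (hf₂ : f₂ ∈ F₂) (he₂ : e₂ ∈ F₂)
    (q₁'' r₁'' : G₁) (hq₁'' : q₁'' ∈ A₁ ^ i) (hr₁'' : r₁'' ∈ A₁ ^ i)
    (q₂'' r₂'' : G₂) (hq₂'' : q₂'' ∈ A₂ ^ i) (hr₂'' : r₂'' ∈ A₂ ^ i)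
    (heq₁ : q₁' * f₁ * b₁' * ψ₁ f₂ * b₁'' * q₁'' = r₁' * e₁ * b₁' * ψ₁ e₂ * b₁'' * r₁'')
    (heq₂ : q₂' * f₂ * b₂' * ψ₂ f₁ * b₂'' * q₂'' = r₂' * e₂ * b₂' * ψ₂ e₁ * b₂'' * r₂'') :
    q₁' = r₁' ∧ q₂' = r₂' ∧ f₁ = e₁ ∧ f₂ = e₂ ∧ q₁'' = r₁'' ∧ q₂'' = r₂'' := by
  obtain ⟨h1a, h1b, h1c⟩ := coord_lemma hone₁ hb₁' hb₁'' hq₁' hr₁' hf₁ he₁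
    (hψ₁.mapsTo hf₂) (hψ₁.mapsTo he₂) hq₁'' hr₁'' heq₁
  obtain ⟨h2a, h2b, h2c⟩ := coord_lemma hone₂ hb₂' hb₂'' hq₂' hr₂' hf₂ he₂
    (hψ₂.mapsTo hf₁) (hψ₂.mapsTo he₁) hq₂'' hr₂'' heq₂
  have hf2e2 : f₂ = e₂ := hψ₁.injOn hf₂ he₂ h1b
  have hf1e1 : f₁ = e₁ := hψ₂.injOn hf₁ he₁ h2b
  refine ⟨?_, ?_, hf1e1, hf2e2, h1c, h2c⟩
  · rw [hf1e1] at h1a; exact mul_right_cancel h1a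
  · rw [hf2e2] at h2a; exact mul_right_cancel h2a
end

section
/- Let $G_1, G_2$ be groups and $i \geq 1$ an integer. For $j = 1, 2$, let $A_j, F_j, S_j$ be finite subsets of $G_j$ with $1 \in A_j$ and $A_j = A_j^{-1}$, with $|S_j| = |F_{3-j}|$, and fix bijections $\psi_j : F_{3-j} \to S_j$. Suppose $b_j' \in G_j$ is an $(A_j \cup S_j^{\pm} \cup F_j^{\pm})^{i+2}$-superswitcher and $b_j'' \in G_j$ is an $(A_j \cup S_j^{\pm} \cup F_j^{\pm} \cup \{b_j'\}^{\pm})^{2i+8}$-superswitcher. If an element $g \in G_1 \times G_2$ can be presented in the form $g = (q_1' (f_1 b_1' \psi_1(f_2) b_1'')^{\sigma} q_1'', \; q_2' (f_2 b_2' \psi_2(f_1) b_2'')^{\sigma} q_2'')$ with $\sigma \in \{1, -1\}$, $q_j' \in A_j^{i+1}$, $f_j \in F_j$, $q_j'' \in A_j^{i}$ for $j = 1, 2$, then this presentation is unique: the sign $\sigma$ and the elements $q_1', q_2', f_1, f_2, q_1'', q_2''$ are uniquely determined by $g$. -/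
open Pointwise

private lemma mem_mul_pow' {G : Type*} [Group G] {T : Set G} {x y : G} {a b : ℕ}
    (hx : x ∈ T ^ a) (hy : y ∈ T ^ b) : x * y ∈ T ^ (a + b) := by
  rw [pow_add]; exact Set.mul_mem_mul hx hy

/-- Single-group key lemma: unique decomposition inside one factor. -/
theorem key_lemma_superswitcher {G : Type*} [Group G] (i : ℕ)
    (A F S : Set G) (hone : (1 : G) ∈ A) (hsymm : A⁻¹ = A)
    (b' b'' : G)
    (hb' : IsSuperswitcher ((A ∪ (S ∪ S⁻¹) ∪ (F ∪ F⁻¹)) ^ (i + 2)) b')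
    (hb'' : IsSuperswitcher
      ((A ∪ (S ∪ S⁻¹) ∪ (F ∪ F⁻¹) ∪ ({b'} ∪ {b'}⁻¹)) ^ (2 * i + 8)) b'')
    (σ τ : ℤ) (hσ : σ ∈ ({1, -1} : Set ℤ)) (hτ : τ ∈ ({1, -1} : Set ℤ))
    (q' r' : G) (hq' : q' ∈ A ^ (i + 1)) (hr' : r' ∈ A ^ (i + 1))
    (f e : G) (hf : f ∈ F) (he : e ∈ F)
    (s t : G) (hs : s ∈ S) (ht : t ∈ S)
    (q'' r'' : G) (hq'' : q'' ∈ A ^ i) (hr'' : r'' ∈ A ^ i)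
    (heq : q' * (f * b' * s * b'') ^ σ * q''
         = r' * (e * b' * t * b'') ^ τ * r'') :
    σ = τ ∧ s = t ∧ (f = e → q' = r' ∧ q'' = r'') := by
  set B : Set G := A ∪ (S ∪ S⁻¹) ∪ (F ∪ F⁻¹) with hBdef
  set B' : Set G := B ∪ ({b'} ∪ {b'}⁻¹) with hB'def
  have hAB : A ⊆ B := fun x hx => Or.inl (Or.inl hx)
  have hSB : S ⊆ B := fun x hx => Or.inl (Or.inr (Or.inl hx))
  have hSiB : S⁻¹ ⊆ B := fun x hx => Or.inl (Or.inr (Or.inr hx))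
  have hFB : F ⊆ B := fun x hx => Or.inr (Or.inl hx)
  have hFiB : F⁻¹ ⊆ B := fun x hx => Or.inr (Or.inr hx)
  have hBB' : B ⊆ B' := Set.subset_union_left
  have h1B : (1 : G) ∈ B := hAB hone
  have h1B' : (1 : G) ∈ B' := hBB' h1B
  have hb'B' : b' ∈ B' := Or.inr (Or.inl rfl)
  have hb'iB' : b'⁻¹ ∈ B' := Or.inr (Or.inr (Set.inv_mem_inv.2 rfl))
  have hq''inv : q''⁻¹ ∈ A ^ i := by
    rw [← hsymm, inv_pow]; exact Set.inv_mem_inv.2 hq''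
  have hr''inv : r''⁻¹ ∈ A ^ i := by
    rw [← hsymm, inv_pow]; exact Set.inv_mem_inv.2 hr''
  -- lifting tools
  have big : ∀ {n : ℕ}, n ≤ 2 * i + 8 → ∀ {x : G}, x ∈ B' ^ n → x ∈ B' ^ (2 * i + 8) :=
    fun {n} hn {x} hx => Set.pow_subset_pow_right h1B' hn hx
  have bigB : ∀ {n : ℕ}, n ≤ i + 2 → ∀ {x : G}, x ∈ B ^ n → x ∈ B ^ (i + 2) :=
    fun {n} hn {x} hx => Set.pow_subset_pow_right h1B hn hx
  have liftA : ∀ {n : ℕ} {x : G}, x ∈ A ^ n → x ∈ B' ^ n :=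
    fun hx => Set.pow_subset_pow_left (hAB.trans hBB') hx
  have liftAB : ∀ {n : ℕ} {x : G}, x ∈ A ^ n → x ∈ B ^ n :=
    fun hx => Set.pow_subset_pow_left hAB hx
  have oneB' : ∀ {x : G}, x ∈ B' → x ∈ B' ^ 1 := fun hx => by rwa [pow_one]
  have oneB : ∀ {x : G}, x ∈ B → x ∈ B ^ 1 := fun hx => by rwa [pow_one]
  -- memberships for hb''
  have mq'B' : q' ∈ B' ^ (2 * i + 8) := big (by omega) (liftA hq')
  have mr'B' : r' ∈ B' ^ (2 * i + 8) := big (by omega) (liftA hr')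
  have mq''B' : q'' ∈ B' ^ (2 * i + 8) := big (by omega) (liftA hq'')
  have mr''B' : r'' ∈ B' ^ (2 * i + 8) := big (by omega) (liftA hr'')
  have mX : q' * f * b' * s ∈ B' ^ (2 * i + 8) :=
    big (by omega) (mem_mul_pow' (mem_mul_pow' (mem_mul_pow' (liftA hq')
      (oneB' (hBB' (hFB hf)))) (oneB' hb'B')) (oneB' (hBB' (hSB hs))))
  have mXe : r' * e * b' * t ∈ B' ^ (2 * i + 8) :=
    big (by omega) (mem_mul_pow' (mem_mul_pow' (mem_mul_pow' (liftA hr')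
      (oneB' (hBB' (hFB he)))) (oneB' hb'B')) (oneB' (hBB' (hSB ht))))
  have mY : s⁻¹ * b'⁻¹ * f⁻¹ * q'' ∈ B' ^ (2 * i + 8) :=
    big (by omega) (mem_mul_pow' (mem_mul_pow' (mem_mul_pow'
      (oneB' (hBB' (hSiB (Set.inv_mem_inv.2 hs)))) (oneB' hb'iB'))
      (oneB' (hBB' (hFiB (Set.inv_mem_inv.2 hf))))) (liftA hq''))
  have mYe : t⁻¹ * b'⁻¹ * e⁻¹ * r'' ∈ B' ^ (2 * i + 8) :=
    big (by omega) (mem_mul_pow' (mem_mul_pow' (mem_mul_pow'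
      (oneB' (hBB' (hSiB (Set.inv_mem_inv.2 ht)))) (oneB' hb'iB'))
      (oneB' (hBB' (hFiB (Set.inv_mem_inv.2 he))))) (liftA hr''))
  -- memberships for hb'
  have mqf : q' * f ∈ B ^ (i + 2) :=
    bigB (by omega) (mem_mul_pow' (liftAB hq') (oneB (hFB hf)))
  have mre : r' * e ∈ B ^ (i + 2) :=
    bigB (by omega) (mem_mul_pow' (liftAB hr') (oneB (hFB he)))
  have mq2f : q''⁻¹ * f ∈ B ^ (i + 2) :=
    bigB (by omega) (mem_mul_pow' (liftAB hq''inv) (oneB (hFB hf)))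
  have mr2e : r''⁻¹ * e ∈ B ^ (i + 2) :=
    bigB (by omega) (mem_mul_pow' (liftAB hr''inv) (oneB (hFB he)))
  have msB : s ∈ B ^ (i + 2) := bigB (by omega) (oneB (hSB hs))
  have mtB : t ∈ B ^ (i + 2) := bigB (by omega) (oneB (hSB ht))
  have mq'B2 : q' ∈ B ^ (i + 2) := bigB (by omega) (liftAB hq')
  have mr'B2 : r' ∈ B ^ (i + 2) := bigB (by omega) (liftAB hr')
  have h1mem : (1 : ℤ) ∈ ({1, -1} : Set ℤ) := Or.inl rfl
  have hm1mem : (-1 : ℤ) ∈ ({1, -1} : Set ℤ) := Or.inr rfl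
  simp only [Set.mem_insert_iff, Set.mem_singleton_iff] at hσ hτ
  rcases hσ with rfl | rfl <;> rcases hτ with rfl | rfl
  · -- σ = 1, τ = 1
    have heq' : (q' * f * b' * s) * b'' ^ (1:ℤ) * q''
        = (r' * e * b' * t) * b'' ^ (1:ℤ) * r'' := by
      simp only [zpow_one, mul_assoc] at heq ⊢; exact heq
    obtain ⟨h1, h2, -⟩ := hb''.2.2 _ mX _ mq''B' _ mXe _ mr''B' 1 h1mem 1 h1mem heq'
    have h1' : (q' * f) * b' ^ (1:ℤ) * s = (r' * e) * b' ^ (1:ℤ) * t := by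
      simp only [zpow_one, mul_assoc] at h1 ⊢; exact h1
    obtain ⟨h1'', h2'', -⟩ := hb'.2.2 _ mqf _ msB _ mre _ mtB 1 h1mem 1 h1mem h1'
    exact ⟨rfl, h2'', fun hfe => ⟨mul_right_cancel (hfe ▸ h1''), h2⟩⟩
  · -- σ = 1, τ = -1 : contradiction
    have heq' : (q' * f * b' * s) * b'' ^ (1:ℤ) * q''
        = r' * b'' ^ (-1:ℤ) * (t⁻¹ * b'⁻¹ * e⁻¹ * r'') := by
      simp only [zpow_one, zpow_neg_one, mul_inv_rev, mul_assoc] at heq ⊢; exact heq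
    obtain ⟨h1, -, -⟩ := hb''.2.2 _ mX _ mq''B' _ mr'B' _ mYe 1 h1mem (-1) hm1mem heq'
    exact ((hb'.1 _ mqf _ msB) (by rw [h1]; exact mr'B2)).elim
  · -- σ = -1, τ = 1 : contradiction
    have heq' : q' * b'' ^ (-1:ℤ) * (s⁻¹ * b'⁻¹ * f⁻¹ * q'')
        = (r' * e * b' * t) * b'' ^ (1:ℤ) * r'' := by
      simp only [zpow_one, zpow_neg_one, mul_inv_rev, mul_assoc] at heq ⊢; exact heq
    obtain ⟨h1, -, -⟩ := hb''.2.2 _ mq'B' _ mY _ mXe _ mr''B' (-1) hm1mem 1 h1mem heq'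
    exact ((hb'.1 _ mre _ mtB) (by rw [← h1]; exact mq'B2)).elim
  · -- σ = -1, τ = -1
    have heq' : q' * b'' ^ (-1:ℤ) * (s⁻¹ * b'⁻¹ * f⁻¹ * q'')
        = r' * b'' ^ (-1:ℤ) * (t⁻¹ * b'⁻¹ * e⁻¹ * r'') := by
      simp only [zpow_neg_one, mul_inv_rev, mul_assoc] at heq ⊢; exact heq
    obtain ⟨h1, h2, -⟩ := hb''.2.2 _ mq'B' _ mY _ mr'B' _ mYe (-1) hm1mem (-1) hm1mem heq'
    have h2' : (q''⁻¹ * f) * b' ^ (1:ℤ) * s = (r''⁻¹ * e) * b' ^ (1:ℤ) * t := by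
      have h3 := congrArg Inv.inv h2
      simp only [mul_inv_rev, inv_inv, mul_assoc] at h3
      simp only [zpow_one, mul_assoc]; exact h3
    obtain ⟨h1'', h2'', -⟩ := hb'.2.2 _ mq2f _ msB _ mr2e _ mtB 1 h1mem 1 h1mem h2'
    refine ⟨rfl, h2'', fun hfe => ⟨h1, ?_⟩⟩
    exact inv_injective (mul_right_cancel (hfe ▸ h1''))

/-- Unique decomposition lemma (symmetric version): if
`g = (q₁' (f₁ b₁' ψ₁(f₂) b₁'')^σ q₁'', q₂' (f₂ b₂' ψ₂(f₁) b₂'')^σ q₂'')` with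
`σ ∈ {1, -1}`, `qⱼ' ∈ Aⱼ^(i+1)`, `fⱼ ∈ Fⱼ`, `qⱼ'' ∈ Aⱼ^i`, then this presentation
(including the sign `σ`) is unique. -/
theorem unique_decomposition_superswitcher
    {G₁ G₂ : Type*} [Group G₁] [Group G₂] (i : ℕ) (hi : 1 ≤ i)
    (A₁ F₁ S₁ : Set G₁) (A₂ F₂ S₂ : Set G₂)
    (hA₁ : A₁.Finite) (hF₁ : F₁.Finite) (hS₁ : S₁.Finite)
    (hA₂ : A₂.Finite) (hF₂ : F₂.Finite) (hS₂ : S₂.Finite)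
    (hone₁ : (1 : G₁) ∈ A₁) (hone₂ : (1 : G₂) ∈ A₂)
    (hsymm₁ : A₁⁻¹ = A₁) (hsymm₂ : A₂⁻¹ = A₂)
    (ψ₁ : G₂ → G₁) (hψ₁ : Set.BijOn ψ₁ F₂ S₁)
    (ψ₂ : G₁ → G₂) (hψ₂ : Set.BijOn ψ₂ F₁ S₂)
    (b₁' b₁'' : G₁) (b₂' b₂'' : G₂)
    (hb₁' : IsSuperswitcher ((A₁ ∪ (S₁ ∪ S₁⁻¹) ∪ (F₁ ∪ F₁⁻¹)) ^ (i + 2)) b₁')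
    (hb₁'' : IsSuperswitcher
      ((A₁ ∪ (S₁ ∪ S₁⁻¹) ∪ (F₁ ∪ F₁⁻¹) ∪ ({b₁'} ∪ {b₁'}⁻¹)) ^ (2 * i + 8)) b₁'')
    (hb₂' : IsSuperswitcher ((A₂ ∪ (S₂ ∪ S₂⁻¹) ∪ (F₂ ∪ F₂⁻¹)) ^ (i + 2)) b₂')
    (hb₂'' : IsSuperswitcher
      ((A₂ ∪ (S₂ ∪ S₂⁻¹) ∪ (F₂ ∪ F₂⁻¹) ∪ ({b₂'} ∪ {b₂'}⁻¹)) ^ (2 * i + 8)) b₂'')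
    -- two presentations of the same element `g` of `G₁ × G₂`:
    (σ τ : ℤ) (hσ : σ ∈ ({1, -1} : Set ℤ)) (hτ : τ ∈ ({1, -1} : Set ℤ))
    (q₁' r₁' : G₁) (hq₁' : q₁' ∈ A₁ ^ (i + 1)) (hr₁' : r₁' ∈ A₁ ^ (i + 1))
    (q₂' r₂' : G₂) (hq₂' : q₂' ∈ A₂ ^ (i + 1)) (hr₂' : r₂' ∈ A₂ ^ (i + 1))
    (f₁ e₁ : G₁) (hf₁ : f₁ ∈ F₁) (he₁ : e₁ ∈ F₁)
    (f₂ e₂ : G₂) (hf₂ : f₂ ∈ F₂) (he₂ : e₂ ∈ F₂)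
    (q₁'' r₁'' : G₁) (hq₁'' : q₁'' ∈ A₁ ^ i) (hr₁'' : r₁'' ∈ A₁ ^ i)
    (q₂'' r₂'' : G₂) (hq₂'' : q₂'' ∈ A₂ ^ i) (hr₂'' : r₂'' ∈ A₂ ^ i)
    (heq₁ : q₁' * (f₁ * b₁' * ψ₁ f₂ * b₁'') ^ σ * q₁''
          = r₁' * (e₁ * b₁' * ψ₁ e₂ * b₁'') ^ τ * r₁'')
    (heq₂ : q₂' * (f₂ * b₂' * ψ₂ f₁ * b₂'') ^ σ * q₂''
          = r₂' * (e₂ * b₂' * ψ₂ e₁ * b₂'') ^ τ * r₂'') :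
    σ = τ ∧ q₁' = r₁' ∧ q₂' = r₂' ∧ f₁ = e₁ ∧ f₂ = e₂ ∧ q₁'' = r₁'' ∧ q₂'' = r₂'' := by
  obtain ⟨hστ, hst1, himp1⟩ := key_lemma_superswitcher i A₁ F₁ S₁ hone₁ hsymm₁ b₁' b₁''
    hb₁' hb₁'' σ τ hσ hτ q₁' r₁' hq₁' hr₁' f₁ e₁ hf₁ he₁ (ψ₁ f₂) (ψ₁ e₂)
    (hψ₁.mapsTo hf₂) (hψ₁.mapsTo he₂) q₁'' r₁'' hq₁'' hr₁'' heq₁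
  obtain ⟨-, hst2, himp2⟩ := key_lemma_superswitcher i A₂ F₂ S₂ hone₂ hsymm₂ b₂' b₂''
    hb₂' hb₂'' σ τ hσ hτ q₂' r₂' hq₂' hr₂' f₂ e₂ hf₂ he₂ (ψ₂ f₁) (ψ₂ e₁)
    (hψ₂.mapsTo hf₁) (hψ₂.mapsTo he₁) q₂'' r₂'' hq₂'' hr₂'' heq₂
  have hf2e2 : f₂ = e₂ := hψ₁.injOn hf₂ he₂ hst1
  have hf1e1 : f₁ = e₁ := hψ₂.injOn hf₁ he₁ hst2
  obtain ⟨hq1, hq1''⟩ := himp1 hf1e1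
  obtain ⟨hq2, hq2''⟩ := himp2 hf2e2
  exact ⟨hστ, hq1, hq2, hf1e1, hf2e2, hq1'', hq2''⟩
end

section
/- Let $G$ be a group, $r \geq 1$ an integer, $A, F, S$ finite subsets of $G$ with $1 \in A$, and $b' \in G$. Suppose $b''$ is a $C$-switcher for $C = (A \cup S \cup F \cup \{b'\})^{2r+8}$. Then the sets $(A \cup S \cup F \cup \{b'\})^{2r+2}$ and $A^{r+1} F b' S b'' A^{r}$ are disjoint. -/
open Pointwise

/-- If `b''` is a `(A ∪ S ∪ F ∪ {b'})^(2r+8)`-switcher, then the sets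
`(A ∪ S ∪ F ∪ {b'})^(2r+2)` and `A^(r+1) F b' S b'' A^r` are disjoint. -/
theorem disjoint_of_switcher {G : Type*} [Group G] (r : ℕ) (hr : 1 ≤ r)
    (A F S : Set G) (hA : A.Finite) (hF : F.Finite) (hS : S.Finite)
    (hone : (1 : G) ∈ A) (b' b'' : G)
    (hb'' : IsSwitcher ((A ∪ S ∪ F ∪ {b'}) ^ (2 * r + 8)) b'') :
    Disjoint ((A ∪ S ∪ F ∪ {b'}) ^ (2 * r + 2))
      (A ^ (r + 1) * F * {b'} * S * {b''} * A ^ r) := by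
  set B := A ∪ S ∪ F ∪ {b'} with hB
  have hAB : A ⊆ B := fun x hx => by simp [hB, hx]
  have hSB : S ⊆ B := fun x hx => by simp [hB, hx]
  have hFB : F ⊆ B := fun x hx => by simp [hB, hx]
  have hb'B : b' ∈ B := by simp [hB]
  have h1B : (1 : G) ∈ B := hAB hone
  rw [Set.disjoint_left]
  rintro x hx1 hx2
  obtain ⟨y, hy, q, hq, rfl⟩ := hx2
  obtain ⟨z, hz, bb, hbb, rfl⟩ := hy
  obtain ⟨w, hw, s, hs, rfl⟩ := hz
  obtain ⟨v, hv, bp, hbp, rfl⟩ := hw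
  obtain ⟨p, hp, f, hf, rfl⟩ := hv
  rw [Set.mem_singleton_iff] at hbb hbp
  have hleft : p * f * bp * s ∈ B ^ (2 * r + 8) := by
    have h1 : p * f * bp * s ∈ B ^ (r + 1) * B * B * B :=
      Set.mul_mem_mul (Set.mul_mem_mul (Set.mul_mem_mul
        (Set.pow_subset_pow hAB h1B le_rfl hp) (hFB hf)) (hbp ▸ hb'B)) (hSB hs)
    have heq : B ^ (r + 1) * B * B * B = B ^ (r + 4) := by
      rw [← pow_succ, ← pow_succ, ← pow_succ]
    rw [heq] at h1
    exact Set.pow_subset_pow_right h1B (by omega) h1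
  have hright : q ∈ B ^ (2 * r + 8) :=
    Set.pow_subset_pow hAB h1B (by omega) hq
  have hmem : p * f * bp * s * bb * q ∈ B ^ (2 * r + 8) :=
    Set.pow_subset_pow_right h1B (by omega) hx1
  exact hb''.1 _ hleft _ hright (hbb ▸ hmem)
end

section
/- Let $G$ be a countable group, $\nu$ a probability measure on $G$ with full support, $(X_n)_{n \geq 1}$ an i.i.d. sequence with law $\nu$, and $Z_n = X_1 \cdots X_n$ the associated random walk. Suppose there are subsets $W_i, W_i' \subseteq G$ for $i \in \mathbb{N}$ with $W_i' \subseteq W_i$ and $W_i \cap W_j = \varnothing$ for $i \neq j$; define $\mathrm{rank}(g) = i$ if $g \in W_i$ and $\mathrm{rank}(g) = 0$ if $g \notin \bigcup_i W_i$; and suppose there is a function $p : \bigcup_i W_i \to G$ such that: (1) $\mathrm{rank}(p(g)) < \mathrm{rank}(g)$ whenever $p(g)$ is defined; (2) for every $h \in G$ there is $N$ such that for all $i > N$ and all $w \in W_i'$ one has $hw \in W_i$ and $p(hw) = h\, p(w)$; (3) almost surely there is $i_0$ such that for all $i > i_0$ there is $j$ with $Z_i \in W_j'$; (4) almost surely there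 is $i_0$ such that for all $i > i_0$ either $p(Z_{i+1}) = p(Z_i)$ or $p(Z_{i+1}) = Z_i$; (5) almost surely the sequence $\mathrm{rank}(Z_i)$ is unbounded. Then the tail $\sigma$-algebra of the process $(Z_n)$ is nontrivial: there exists a tail-measurable event whose probability is strictly between $0$ and $1$. -/
/-!
Suppose the tail were trivial. For a level `ρ`, the ancestor of `g` at level `ρ` is the first
element of the chain `g, p g, p (p g), …` of rank at most `ρ`. By (3) and (4), from some time on
`p (Z (m + 1))` is either `p (Z m)` or `Z m`, and the ranks at the times of the second kind
strictly increase; hence the ancestor of `Z m` at level `ρ` is eventually constant along the times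
at which `rank (Z m) > ρ`. Its eventual value is tail-measurable, so it is almost surely a
constant `v ρ`.

The first step `X 0` is independent of the later steps and takes every value `g` with positive
probability, so the same holds for the walk `g * Z'` built from the later steps, for every `g`.
Take `h ≠ 1` (there is one by (5)). By (2), at a suitable level `ρ` above the equivariance
threshold of `h`, the ancestors of `h * Z' m` are `h` times those of `Z' m`, so `v ρ = h * v ρ`,
a contradiction.
-/

open MeasureTheory ProbabilityTheory Filter

section RankedStructure

variable {G Ω : Type*}

-- The test `rank (p g) < rank g` only ensures termination: `p` lowers the rank on `⋃ W i`.
def ancestor (rank : G → ℕ) (p : G → G) (ρ : ℕ) (g : G) : G :=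
  if ρ < rank g ∧ rank (p g) < rank g then ancestor rank p ρ (p g) else g
termination_by rank g
decreasing_by omega

section Ancestor

variable {rank : G → ℕ} {p : G → G} {ρ : ℕ} {g : G}

theorem ancestor_of_rank_le (h : rank g ≤ ρ) : ancestor rank p ρ g = g := by
  rw [ancestor, if_neg (by omega)]

theorem ancestor_of_lt_rank (hρ : ρ < rank g) (hp : rank (p g) < rank g) :
    ancestor rank p ρ g = ancestor rank p ρ (p g) := by
  rw [ancestor, if_pos ⟨hρ, hp⟩]

end Ancestor

section ParentSteps

variable {rank : G → ℕ} {p : G → G} {z : ℕ → G} {T : ℕ}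
  (hdec : ∀ m, T ≤ m → rank (p (z m)) < rank (z m))
  (hstep : ∀ m, T ≤ m → p (z (m + 1)) = p (z m) ∨ p (z (m + 1)) = z m)
include hdec hstep

theorem rank_parent_mono {m n : ℕ} (hm : T ≤ m) (hmn : m ≤ n) :
    rank (p (z m)) ≤ rank (p (z n)) := by
  induction n, hmn using Nat.le_induction with
  | base => exact le_rfl
  | succ n hmn ih =>
    rcases hstep n (hm.trans hmn) with h | h <;> rw [h]
    · exact ih
    · exact ih.trans (hdec n (hm.trans hmn)).le

theorem rank_lt_of_parent_step {k m : ℕ} (hk : T ≤ k) (hkm : k < m)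
    (hpk : p (z (k + 1)) = z k) : rank (z k) < rank (z m) :=
  calc rank (z k) = rank (p (z (k + 1))) := by rw [hpk]
    _ ≤ rank (p (z m)) := rank_parent_mono hdec hstep (by omega) hkm
    _ < rank (z m) := hdec m (by omega)

theorem exists_forall_parent_step_le_rank (ρ : ℕ) :
    ∃ M, T ≤ M ∧ ∀ m, M ≤ m → p (z (m + 1)) = z m → ρ ≤ rank (z m) := by
  induction ρ with
  | zero => exact ⟨T, le_rfl, fun _ _ _ => Nat.zero_le _⟩
  | succ ρ ih =>
    obtain ⟨M, hTM, hM⟩ := ih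
    by_cases hk : ∃ k, M ≤ k ∧ p (z (k + 1)) = z k
    · obtain ⟨k, hMk, hpk⟩ := hk
      refine ⟨k + 1, by omega, fun m hm _ => ?_⟩
      have := rank_lt_of_parent_step hdec hstep (hTM.trans hMk) hm hpk
      have := hM k hMk hpk
      omega
    · push Not at hk
      exact ⟨M, hTM, fun m hm hpm => absurd hpm (hk m hm)⟩

theorem ancestor_parent_eq {ρ M : ℕ} (hTM : T ≤ M)
    (hM : ∀ m, M ≤ m → p (z (m + 1)) = z m → ρ < rank (z m)) {m : ℕ} (hm : M ≤ m) :
    ancestor rank p ρ (p (z m)) = ancestor rank p ρ (p (z M)) := by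
  induction m, hm using Nat.le_induction with
  | base => rfl
  | succ n hMn ih =>
    rcases hstep n (hTM.trans hMn) with h | h
    · rw [h, ih]
    · rw [h, ancestor_of_lt_rank (hM n hMn h) (hdec n (hTM.trans hMn)), ih]

theorem exists_eventually_ancestor_eq (ρ : ℕ) :
    ∃ w, ∀ᶠ m in atTop, ρ < rank (z m) → ancestor rank p ρ (z m) = w := by
  obtain ⟨M, hTM, hM⟩ := exists_forall_parent_step_le_rank hdec hstep (ρ + 1)
  refine ⟨ancestor rank p ρ (p (z M)), eventually_atTop.2 ⟨M, fun m hm hρ => ?_⟩⟩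
  rw [ancestor_of_lt_rank hρ (hdec m (hTM.trans hm)), ancestor_parent_eq hdec hstep hTM hM hm]

end ParentSteps

section Equivariance

variable [Group G] {W W' : ℕ → Set G} {rank : G → ℕ} {p : G → G} {h : G} {N ρ : ℕ}
  (hsub : ∀ i, W' i ⊆ W i) (hrank : ∀ i, 1 ≤ i → ∀ g ∈ W i, rank g = i)
  (hN : ∀ i, N < i → ∀ w ∈ W' i, h * w ∈ W i ∧ p (h * w) = h * p w)
include hsub hrank hN

theorem rank_mul_of_mem {g : G} {j : ℕ} (hg : g ∈ W' j) (hj : N < j) :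
    rank (h * g) = j ∧ rank g = j :=
  ⟨hrank j (by omega) _ (hN j hj g hg).1, hrank j (by omega) g (hsub j hg)⟩

variable (h1 : ∀ i, 1 ≤ i → ∀ g ∈ W i, rank (p g) < rank g)
include h1

theorem ancestor_mul_of_mem {g : G} {j : ℕ} (hg : g ∈ W' j) (hj : N < j) (hρ : ρ < j)
    (hpar : ancestor rank p ρ (h * p g) = h * ancestor rank p ρ (p g)) :
    ancestor rank p ρ (h * g) = h * ancestor rank p ρ g := by
  obtain ⟨hhg, hpg⟩ := hN j hj g hg
  obtain ⟨rhg, rg⟩ := rank_mul_of_mem hsub hrank hN hg hj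
  rw [ancestor_of_lt_rank (rhg ▸ hρ) (h1 j (by omega) _ hhg), hpg, hpar,
    ancestor_of_lt_rank (rg ▸ hρ) (h1 j (by omega) g (hsub j hg))]

variable {z : ℕ → G} {T : ℕ} (haW : ∀ m, T ≤ m → ∃ j, 1 ≤ j ∧ z m ∈ W' j)
  (hstep : ∀ m, T ≤ m → p (z (m + 1)) = p (z m) ∨ p (z (m + 1)) = z m)
include haW hstep

theorem ancestor_mul_parent_of_le {M : ℕ} (hNρ : N ≤ ρ) (hTM : T ≤ M)
    (hM : ∀ m, M ≤ m → p (z (m + 1)) = z m → ρ < rank (z m))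
    (hQ : ancestor rank p ρ (h * p (z M)) = h * ancestor rank p ρ (p (z M)))
    {m : ℕ} (hm : M ≤ m) :
    ancestor rank p ρ (h * p (z m)) = h * ancestor rank p ρ (p (z m)) := by
  induction m, hm using Nat.le_induction with
  | base => exact hQ
  | succ n hMn ih =>
    rcases hstep n (hTM.trans hMn) with hpn | hpn <;> rw [hpn]
    · exact ih
    · obtain ⟨j, hj1, hj⟩ := haW n (hTM.trans hMn)
      have hρj : ρ < j := hrank j hj1 _ (hsub j hj) ▸ hM n hMn hpn
      exact ancestor_mul_of_mem hsub hrank hN h1 hj (by omega) hρj ih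

theorem exists_level_ancestor_mul_parent :
    ∃ ρ M, N ≤ ρ ∧ T ≤ M ∧ (∀ m, M ≤ m → p (z (m + 1)) = z m → ρ < rank (z m)) ∧
      ancestor rank p ρ (h * p (z M)) = h * ancestor rank p ρ (p (z M)) := by
  have hdec : ∀ m, T ≤ m → rank (p (z m)) < rank (z m) := fun m hm =>
    let ⟨j, hj1, hj⟩ := haW m hm; h1 j hj1 _ (hsub j hj)
  obtain ⟨M, hTM, hM⟩ := exists_forall_parent_step_le_rank hdec hstep (N + 1)
  by_cases hk : ∃ k, M ≤ k ∧ p (z (k + 1)) = z k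
  · obtain ⟨k, hMk, hpk⟩ := hk
    obtain ⟨j, hj1, hj⟩ := haW k (hTM.trans hMk)
    have hNj : N < j := hrank j hj1 _ (hsub j hj) ▸ hM k hMk hpk
    obtain ⟨rhz, rz⟩ := rank_mul_of_mem hsub hrank hN hj hNj
    refine ⟨j, k + 1, hNj.le, by omega, fun m hm _ => ?_, ?_⟩
    · exact rz ▸ rank_lt_of_parent_step hdec hstep (hTM.trans hMk) hm hpk
    · rw [hpk, ancestor_of_rank_le rhz.le, ancestor_of_rank_le rz.le]
  · push Not at hk
    refine ⟨max N (max (rank (p (z M))) (rank (h * p (z M)))), M, le_max_left _ _, hTM,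
      fun m hm hpm => absurd hpm (hk m hm), ?_⟩
    rw [ancestor_of_rank_le (by omega), ancestor_of_rank_le (by omega)]

end Equivariance

theorem frequently_lt_of_forall_exists_lt {f : ℕ → ℕ} (hf : ∀ C, ∃ n, C < f n) (C : ℕ) :
    ∃ᶠ n in atTop, C < f n := by
  refine frequently_atTop.2 fun a => ?_
  obtain ⟨n, hn⟩ := hf (C + ∑ i ∈ Finset.range a, f i)
  refine ⟨n, not_lt.1 fun hna => ?_, by omega⟩
  have := Finset.single_le_sum (fun i _ => Nat.zero_le (f i)) (Finset.mem_range.2 hna)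
  omega

def IsRankedTrajectory (W' : ℕ → Set G) (rank : G → ℕ) (p : G → G) (z : ℕ → G) : Prop :=
  (∀ᶠ m in atTop, ∃ j, 1 ≤ j ∧ z m ∈ W' j) ∧
  (∀ᶠ m in atTop, p (z (m + 1)) = p (z m) ∨ p (z (m + 1)) = z m) ∧
  ∀ C, ∃ᶠ m in atTop, C < rank (z m)

def AncestorEventuallyEq (rank : G → ℕ) (p : G → G) (ρ : ℕ) (w : G) (z : ℕ → G) : Prop :=
  ∀ᶠ m in atTop, ρ < rank (z m) → ancestor rank p ρ (z m) = w

theorem IsRankedTrajectory.of_exists {W' : ℕ → Set G} {rank : G → ℕ} {p : G → G}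
    {z : ℕ → G} (h3 : ∃ i₀ : ℕ, ∀ i, i₀ < i → ∃ j, 1 ≤ j ∧ z i ∈ W' j)
    (h4 : ∃ i₀ : ℕ, ∀ i, i₀ < i → p (z (i + 1)) = p (z i) ∨ p (z (i + 1)) = z i)
    (h5 : ∀ C : ℕ, ∃ n, C < rank (z n)) : IsRankedTrajectory W' rank p z :=
  let ⟨i₀, hi₀⟩ := h3
  let ⟨i₁, hi₁⟩ := h4
  ⟨(eventually_gt_atTop i₀).mono hi₀, (eventually_gt_atTop i₁).mono hi₁,
    frequently_lt_of_forall_exists_lt h5⟩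

namespace IsRankedTrajectory

variable {W W' : ℕ → Set G} {rank : G → ℕ} {p : G → G} {z : ℕ → G}
  (hz : IsRankedTrajectory W' rank p z)
include hz

theorem exists_ancestorEventuallyEq (hsub : ∀ i, W' i ⊆ W i)
    (h1 : ∀ i, 1 ≤ i → ∀ g ∈ W i, rank (p g) < rank g) (ρ : ℕ) :
    ∃ w, AncestorEventuallyEq rank p ρ w z := by
  obtain ⟨T, hT⟩ := eventually_atTop.1 (hz.1.and hz.2.1)
  exact exists_eventually_ancestor_eq
    (fun m hm => let ⟨j, hj1, hj⟩ := (hT m hm).1; h1 j hj1 _ (hsub j hj))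
    (fun m hm => (hT m hm).2) ρ

theorem eq_one_of_ancestorEventuallyEq [Group G] {h : G} {N : ℕ}
    (hsub : ∀ i, W' i ⊆ W i) (hrank : ∀ i, 1 ≤ i → ∀ g ∈ W i, rank g = i)
    (hN : ∀ i, N < i → ∀ w ∈ W' i, h * w ∈ W i ∧ p (h * w) = h * p w)
    (h1 : ∀ i, 1 ≤ i → ∀ g ∈ W i, rank (p g) < rank g) {v : ℕ → G}
    (hv : ∀ ρ, AncestorEventuallyEq rank p ρ (v ρ) z)
    (hhv : ∀ ρ, AncestorEventuallyEq rank p ρ (v ρ) (fun m => h * z m)) : h = 1 := by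
  obtain ⟨T, hT⟩ := eventually_atTop.1 (hz.1.and hz.2.1)
  have haW := fun m hm => (hT m hm).1
  have hstep := fun m hm => (hT m hm).2
  obtain ⟨ρ, M, hNρ, hTM, hM, hQ⟩ :=
    exists_level_ancestor_mul_parent hsub hrank hN h1 haW hstep
  obtain ⟨m, hρm, ⟨hvm, hhvm⟩, hMm⟩ :=
    ((hz.2.2 ρ).and_eventually (((hv ρ).and (hhv ρ)).and (eventually_ge_atTop M))).exists
  beta_reduce at hhvm
  obtain ⟨j, hj1, hj⟩ := haW m (hTM.trans hMm)
  have rz : rank (z m) = j := hrank j hj1 _ (hsub j hj)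
  have rhz : rank (h * z m) = j := (rank_mul_of_mem hsub hrank hN hj (by omega)).1
  refine (right_eq_mul (b := v ρ)).1 ?_
  calc v ρ = ancestor rank p ρ (h * z m) := (hhvm (by omega)).symm
    _ = h * ancestor rank p ρ (z m) := ancestor_mul_of_mem hsub hrank hN h1 hj (by omega)
        (by omega) (ancestor_mul_parent_of_le hsub hrank hN h1 haW hstep hNρ hTM hM hQ hMm)
    _ = h * v ρ := by rw [hvm hρm]

end IsRankedTrajectory

def ShiftInvariant {α : Type*} (Φ : (ℕ → α) → Prop) : Prop :=
  ∀ z, Φ (fun m => z (m + 1)) ↔ Φ z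

theorem eventually_atTop_succ_iff {P : ℕ → Prop} :
    (∀ᶠ m in atTop, P (m + 1)) ↔ ∀ᶠ m in atTop, P m := by
  rw [← eventually_map (m := fun m => m + 1), map_add_atTop_eq_nat]

theorem frequently_atTop_succ_iff {P : ℕ → Prop} :
    (∃ᶠ m in atTop, P (m + 1)) ↔ ∃ᶠ m in atTop, P m := by
  rw [← frequently_map (m := fun m => m + 1), map_add_atTop_eq_nat]

section Shift

variable {W' : ℕ → Set G} {rank : G → ℕ} {p : G → G}

theorem shiftInvariant_isRankedTrajectory : ShiftInvariant (IsRankedTrajectory W' rank p) := by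
  intro z
  unfold IsRankedTrajectory
  exact (eventually_atTop_succ_iff (P := fun m => ∃ j, 1 ≤ j ∧ z m ∈ W' j)).and
    ((eventually_atTop_succ_iff (P := fun m => p (z (m + 1)) = p (z m) ∨ p (z (m + 1)) = z m)).and
      (forall_congr' fun C => frequently_atTop_succ_iff (P := fun m => C < rank (z m))))

theorem shiftInvariant_ancestorEventuallyEq (ρ : ℕ) (w : G) :
    ShiftInvariant (AncestorEventuallyEq rank p ρ w) := by
  intro z
  unfold AncestorEventuallyEq
  exact eventually_atTop_succ_iff (P := fun m => ρ < rank (z m) → ancestor rank p ρ (z m) = w)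

variable [MeasurableSpace G] [DiscreteMeasurableSpace G] [Countable G]

theorem measurable_isRankedTrajectory : Measurable (IsRankedTrajectory W' rank p) := by
  unfold IsRankedTrajectory
  simp only [eventually_atTop, frequently_atTop]
  fun_prop (disch := exact .of_discrete)

theorem measurable_ancestorEventuallyEq (ρ : ℕ) (w : G) :
    Measurable (AncestorEventuallyEq rank p ρ w) := by
  unfold AncestorEventuallyEq
  simp only [eventually_atTop]
  fun_prop (disch := exact .of_discrete)

end Shift

abbrev tailMeasurableSpace [MeasurableSpace G] (Z : ℕ → Ω → G) : MeasurableSpace Ω :=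
  ⨅ n, ⨆ m, ⨆ (_ : n ≤ m), MeasurableSpace.comap (Z m) ‹MeasurableSpace G›

theorem tailMeasurableSpace_le [MeasurableSpace G] {mΩ : MeasurableSpace Ω} {Z : ℕ → Ω → G}
    (hZ : ∀ m, Measurable (Z m)) : tailMeasurableSpace Z ≤ mΩ :=
  iInf_le_of_le 0 (iSup₂_le fun m _ => (hZ m).comap_le)

theorem measurableSet_tail_of_shiftInvariant [MeasurableSpace G] (Z : ℕ → Ω → G)
    {Φ : (ℕ → G) → Prop} (hΦ : Measurable Φ) (hinv : ShiftInvariant Φ) :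
    MeasurableSet[tailMeasurableSpace Z] {ω | Φ fun m => Z m ω} := by
  refine MeasurableSpace.measurableSet_iInf.2 fun n => ?_
  have hshift : ∀ k z, Φ (fun m => z (m + k)) ↔ Φ z := by
    intro k
    induction k with
    | zero => exact fun _ => Iff.rfl
    | succ k ih => exact fun z => (ih _).trans (hinv z)
  let _ : MeasurableSpace Ω := ⨆ m, ⨆ (_ : n ≤ m), MeasurableSpace.comap (Z m) ‹_›
  have hmeas : Measurable fun ω m => Z (m + n) ω := measurable_pi_iff.2 fun m =>
    measurable_iff_comap_le.2 (le_iSup₂_of_le (m + n) (Nat.le_add_left n m) le_rfl)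
  have hset : {ω | Φ fun m => Z m ω} = (fun ω m => Z (m + n) ω) ⁻¹' {z | Φ z} :=
    Set.ext fun ω => (hshift n fun m => Z m ω).symm
  exact hset ▸ hmeas hΦ.setOf

theorem exists_ae_of_ae_exists {mΩ : MeasurableSpace Ω} {μ : Measure Ω} [NeZero μ]
    {ι : Type*} [Countable ι] {P : ι → Ω → Prop}
    (h01 : ∀ i, (∀ᵐ ω ∂μ, ¬ P i ω) ∨ ∀ᵐ ω ∂μ, P i ω) (h : ∀ᵐ ω ∂μ, ∃ i, P i ω) :
    ∃ i, ∀ᵐ ω ∂μ, P i ω := by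
  by_contra hnone
  have hnot : ∀ᵐ ω ∂μ, ∀ i, ¬ P i ω :=
    ae_all_iff.2 fun i => (h01 i).resolve_right (not_exists.1 hnone i)
  obtain ⟨ω, ⟨i, hi⟩, hω⟩ := (h.and hnot).exists
  exact hω i hi

theorem exists_ae_ancestorEventuallyEq [MeasurableSpace G] [DiscreteMeasurableSpace G]
    [Countable G] {W W' : ℕ → Set G} {rank : G → ℕ} {p : G → G} {mΩ : MeasurableSpace Ω}
    {μ : Measure Ω} [NeZero μ] {Z : ℕ → Ω → G}
    (h01 : ∀ E, MeasurableSet[tailMeasurableSpace Z] E → (∀ᵐ ω ∂μ, ω ∉ E) ∨ ∀ᵐ ω ∂μ, ω ∈ E)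
    (hsub : ∀ i, W' i ⊆ W i) (h1 : ∀ i, 1 ≤ i → ∀ g ∈ W i, rank (p g) < rank g)
    (hZ : ∀ᵐ ω ∂μ, IsRankedTrajectory W' rank p fun n => Z n ω) :
    ∃ v : ℕ → G, ∀ᵐ ω ∂μ, ∀ ρ, AncestorEventuallyEq rank p ρ (v ρ) fun n => Z n ω := by
  have hv : ∀ ρ, ∃ w, ∀ᵐ ω ∂μ, AncestorEventuallyEq rank p ρ w fun n => Z n ω := fun ρ =>
    exists_ae_of_ae_exists
      (fun w => h01 _ (measurableSet_tail_of_shiftInvariant Z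
        (measurable_ancestorEventuallyEq ρ w) (shiftInvariant_ancestorEventuallyEq ρ w)))
      (hZ.mono fun ω hω => hω.exists_ancestorEventuallyEq hsub h1 ρ)
  choose v hv using hv
  exact ⟨v, ae_all_iff.2 hv⟩

theorem ae_notMem_or_ae_mem {mΩ : MeasurableSpace Ω} {μ : Measure Ω} [IsProbabilityMeasure μ]
    {E : Set Ω} (hE : MeasurableSet E) (h : 0 < μ E → 1 ≤ μ E) :
    (∀ᵐ ω ∂μ, ω ∉ E) ∨ ∀ᵐ ω ∂μ, ω ∈ E :=
  (eq_zero_or_pos (μ E)).imp measure_eq_zero_iff_ae_notMem.1 fun hpos =>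
    (mem_ae_iff_prob_eq_one hE).2 (le_antisymm prob_le_one (h hpos))

theorem ae_of_indep_of_ae_imp {m₁ m₂ mΩ : MeasurableSpace Ω}
    {μ : Measure Ω} (hI : Indep m₁ m₂ μ) {A B : Set Ω} (hA : MeasurableSet[m₁] A)
    (hB : MeasurableSet[m₂] B) (hA0 : μ A ≠ 0) (hAB : ∀ᵐ ω ∂μ, ω ∈ A → ω ∈ B) :
    ∀ᵐ ω ∂μ, ω ∈ B := by
  have h0 : μ (A ∩ Bᶜ) = 0 := by
    refine measure_eq_zero_iff_ae_notMem.2 ?_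
    filter_upwards [hAB] with ω hω ⟨hωA, hωB⟩ using hωB (hω hωA)
  rw [(Indep_iff _ _ _).1 hI _ _ hA hB.compl, mul_eq_zero] at h0
  exact ae_iff.2 (h0.resolve_left hA0)

theorem measurable_prod_range_map {M α : Type*} [Monoid M] [MeasurableSpace M] [MeasurableMul₂ M]
    [MeasurableSpace α] {f : ℕ → α → M} (hf : ∀ i, Measurable (f i)) (n : ℕ) :
    Measurable fun a => ((List.range n).map (f · a)).prod := by
  induction n with
  | zero => simp only [List.range_zero, List.map_nil, List.prod_nil]; exact measurable_const
  | succ n ih => simp only [List.prod_range_succ]; exact ih.mul (hf n)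

theorem ae_mul_walk_of_ae [Group G] [MeasurableSpace G] [DiscreteMeasurableSpace G] [Countable G]
    {mΩ : MeasurableSpace Ω} {μ : Measure Ω} {X Z : ℕ → Ω → G} (hX : ∀ i, Measurable (X i))
    (hindep : iIndepFun X μ) (hZ : ∀ n ω, Z n ω = ((List.range n).map (X · ω)).prod)
    {Φ : (ℕ → G) → Prop} (hΦ : Measurable Φ) (hinv : ShiftInvariant Φ)
    (hae : ∀ᵐ ω ∂μ, Φ fun n => Z n ω) {g : G} (hg : μ {ω | X 0 ω = g} ≠ 0) :
    ∀ᵐ ω ∂μ, Φ fun n => g * ((List.range n).map fun i => X (i + 1) ω).prod := by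
  set S : Ω → ℕ → G := fun ω i => X (i + 1) ω
  set M := ⨆ i ∈ Set.Ioi 0, MeasurableSpace.comap (X i) ‹MeasurableSpace G›
  have hS : Measurable[M] S := (@measurable_pi_iff Ω ℕ (fun _ => G) M _ S).2 fun i =>
    measurable_iff_comap_le.2 (le_iSup₂_of_le (i + 1) i.succ_pos le_rfl)
  have hI : Indep (MeasurableSpace.comap (X 0) ‹_›) (MeasurableSpace.comap S MeasurableSpace.pi)
      μ :=
    indep_of_indep_of_le_left (indep_of_indep_of_le_right
      (indep_iSup_of_disjoint (fun i => (hX i).comap_le) hindep.iIndep (S := {0}) (T := Set.Ioi 0)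
        (by simp)) hS.comap_le) (le_iSup₂_of_le 0 rfl le_rfl)
  refine ae_of_indep_of_ae_imp hI (comap_measurable (X 0) (measurableSet_singleton g))
    (B := S ⁻¹' {s | Φ fun n => g * ((List.range n).map s).prod})
    (comap_measurable S (hΦ.setOf.preimage ?_)) hg ?_
  · exact measurable_pi_iff.2 fun n =>
      (measurable_prod_range_map (fun i => measurable_pi_apply i) n).const_mul g
  · filter_upwards [hae] with ω hω (hX0 : X 0 ω = g)
    rw [← hinv] at hω
    simp only [hZ, List.prod_range_succ', hX0] at hω
    exact hω

end RankedStructure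

theorem tail_nontrivial_of_ranked_structure_general
    {G : Type*} [Group G] [Countable G]
    {Ω : Type*} [MeasurableSpace Ω] (μ : Measure Ω) [IsProbabilityMeasure μ]
    -- the step distribution: a probability measure of full support on `G`
    (ν : G → ENNReal) (hfull : ∀ g, 0 < ν g)
    -- the i.i.d. steps and the random walk
    (X : ℕ → Ω → G)
    (hXmeas : ∀ i (g : G), MeasurableSet {ω | X i ω = g})
    (hindep : iIndepFun (m := fun _ => (⊤ : MeasurableSpace G)) X μ)
    (hdist : ∀ i (g : G), μ {ω | X i ω = g} = ν g)
    (Z : ℕ → Ω → G)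
    (hZ : ∀ n ω, Z n ω = ((List.range n).map (fun i => X i ω)).prod)
    -- the combinatorial data
    (W W' : ℕ → Set G)
    (hsub : ∀ i, W' i ⊆ W i)
    (rank : G → ℕ)
    (hrank : ∀ i, 1 ≤ i → ∀ g ∈ W i, rank g = i)
    (p : G → G)
    -- (1) `p` decreases rank
    (h1 : ∀ i, 1 ≤ i → ∀ g ∈ W i, rank (p g) < rank g)
    -- (2) eventual equivariance
    (h2 : ∀ h : G, ∃ N : ℕ, ∀ i, N < i → ∀ w ∈ W' i, h * w ∈ W i ∧ p (h * w) = h * p w)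
    -- (3) the walk eventually lies in `⋃ W'_j`
    (h3 : ∀ᵐ ω ∂μ, ∃ i₀ : ℕ, ∀ i, i₀ < i → ∃ j, 1 ≤ j ∧ Z i ω ∈ W' j)
    -- (4) eventually `p(Z_{i+1}) = p(Z_i)` or `p(Z_{i+1}) = Z_i`
    (h4 : ∀ᵐ ω ∂μ, ∃ i₀ : ℕ, ∀ i, i₀ < i →
      p (Z (i + 1) ω) = p (Z i ω) ∨ p (Z (i + 1) ω) = Z i ω)
    -- (5) the rank of the walk is unbounded
    (h5 : ∀ᵐ ω ∂μ, ∀ C : ℕ, ∃ n, C < rank (Z n ω)) :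
    ∃ E : Set Ω,
      MeasurableSet[⨅ n : ℕ, ⨆ m : ℕ, ⨆ _ : n ≤ m,
        MeasurableSpace.comap (Z m) (⊤ : MeasurableSpace G)] E ∧
      0 < μ E ∧ μ E < 1 := by
  let _ : MeasurableSpace G := ⊤
  have hX : ∀ i, Measurable (X i) := fun i => measurable_to_countable' (hXmeas i)
  have hZm : ∀ m, Measurable (Z m) := fun m => funext (hZ m) ▸ measurable_prod_range_map hX m
  by_contra! htriv
  have hwalk : ∀ᵐ ω ∂μ, IsRankedTrajectory W' rank p fun n => Z n ω := by
    filter_upwards [h3, h4, h5] using fun ω => IsRankedTrajectory.of_exists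
  obtain ⟨v, hv⟩ := exists_ae_ancestorEventuallyEq
    (fun E hE => ae_notMem_or_ae_mem (tailMeasurableSpace_le hZm E hE) (htriv E hE)) hsub h1 hwalk
  let Φ : (ℕ → G) → Prop := fun z =>
    IsRankedTrajectory W' rank p z ∧ ∀ ρ, AncestorEventuallyEq rank p ρ (v ρ) z
  have hshifted : ∀ g : G,
      ∀ᵐ ω ∂μ, Φ fun n => g * ((List.range n).map fun i => X (i + 1) ω).prod :=
    fun g => ae_mul_walk_of_ae hX hindep hZ
      (measurable_isRankedTrajectory.and (.forall fun ρ => measurable_ancestorEventuallyEq ρ (v ρ)))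
      (fun z => (shiftInvariant_isRankedTrajectory z).and
        (forall_congr' fun ρ => shiftInvariant_ancestorEventuallyEq ρ (v ρ) z))
      (hwalk.and hv) (by rw [hdist]; exact (hfull g).ne')
  obtain ⟨h, hne⟩ : ∃ h : G, h ≠ 1 := by
    obtain ⟨ω, hω⟩ := h5.exists
    obtain ⟨n, hn⟩ := hω (rank 1)
    exact ⟨Z n ω, fun h => hn.ne (by rw [h])⟩
  obtain ⟨N, hN⟩ := h2 h
  obtain ⟨ω, ⟨hω, hωv⟩, -, hhωv⟩ := ((hshifted 1).and (hshifted h)).exists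
  simp only [one_mul] at hω hωv
  exact hne (hω.eq_one_of_ancestorEventuallyEq hsub hrank hN h1 hωv hhωv)

/-- Abstract non-triviality criterion for the tail σ-algebra of a random walk.
`(X_n)` is an i.i.d. sequence with (fully supported) law `ν` on a countable group `G`,
and `Z_n = X_0 ⋯ X_{n-1}` is the associated random walk.  Given disjoint sets `W_i`,
subsets `W'_i ⊆ W_i`, the associated rank function, and a map `p` defined on `⋃ W_i`
satisfying hypotheses (1)–(5), the tail σ-algebra `⋂ₙ σ(Z_m : m ≥ n)` is nontrivial:
some tail-measurable event has probability strictly between `0` and `1`. -/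
theorem tail_nontrivial_of_ranked_structure
    {G : Type*} [Group G] [Countable G]
    {Ω : Type*} [MeasurableSpace Ω] (μ : Measure Ω) [IsProbabilityMeasure μ]
    -- the step distribution: a probability measure of full support on `G`
    (ν : G → ENNReal) (hfull : ∀ g, 0 < ν g) (hν : ∑' g : G, ν g = 1)
    -- the i.i.d. steps and the random walk
    (X : ℕ → Ω → G)
    (hXmeas : ∀ i (g : G), MeasurableSet {ω | X i ω = g})
    (hindep : iIndepFun (m := fun _ => (⊤ : MeasurableSpace G)) X μ)
    (hdist : ∀ i (g : G), μ {ω | X i ω = g} = ν g)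
    (Z : ℕ → Ω → G)
    (hZ : ∀ n ω, Z n ω = ((List.range n).map (fun i => X i ω)).prod)
    -- the combinatorial data
    (W W' : ℕ → Set G)
    (hsub : ∀ i, W' i ⊆ W i)
    (hdisj : ∀ i j, i ≠ j → Disjoint (W i) (W j))
    (rank : G → ℕ)
    (hrank : ∀ i, 1 ≤ i → ∀ g ∈ W i, rank g = i)
    (hrank0 : ∀ g : G, (∀ i, 1 ≤ i → g ∉ W i) → rank g = 0)
    (p : G → G)
    -- (1) `p` decreases rank
    (h1 : ∀ i, 1 ≤ i → ∀ g ∈ W i, rank (p g) < rank g)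
    -- (2) eventual equivariance
    (h2 : ∀ h : G, ∃ N : ℕ, ∀ i, N < i → ∀ w ∈ W' i, h * w ∈ W i ∧ p (h * w) = h * p w)
    -- (3) the walk eventually lies in `⋃ W'_j`
    (h3 : ∀ᵐ ω ∂μ, ∃ i₀ : ℕ, ∀ i, i₀ < i → ∃ j, 1 ≤ j ∧ Z i ω ∈ W' j)
    -- (4) eventually `p(Z_{i+1}) = p(Z_i)` or `p(Z_{i+1}) = Z_i`
    (h4 : ∀ᵐ ω ∂μ, ∃ i₀ : ℕ, ∀ i, i₀ < i →
      p (Z (i + 1) ω) = p (Z i ω) ∨ p (Z (i + 1) ω) = Z i ω)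
    -- (5) the rank of the walk is unbounded
    (h5 : ∀ᵐ ω ∂μ, ∀ C : ℕ, ∃ n, C < rank (Z n ω)) :
    ∃ E : Set Ω,
      MeasurableSet[⨅ n : ℕ, ⨆ m : ℕ, ⨆ _ : n ≤ m,
        MeasurableSpace.comap (Z m) (⊤ : MeasurableSpace G)] E ∧
      0 < μ E ∧ μ E < 1 :=
  tail_nontrivial_of_ranked_structure_general μ ν hfull X hXmeas hindep hdist Z hZ W W' hsub rank
    hrank p h1 h2 h3 h4 h5
end
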